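/- arXiv:1810.09667 — 9 statements merged into one kernel-verified Lean document; each statement's English description precedes it below -/
import Mathlib

section
/- Let A and B be n×n real symmetric positive semidefinite matrices. Then the determinantal rank of the matrix pencil ⟨A,B⟩, defined as max over k ∈ ℝ of rank(A + kB), equals rank(A + B). -/
open Matrix

/- Every `A + k • B` annihilates the common null vectors of `A` and `B`, and by positivity these
are exactly the null vectors of `A + B`. Hence `ker (A + B) ≤ ker (A + k • B)` for every `k`, so by
rank–nullity `A + B` has maximal rank in the pencil, and `k = 1` attains it. -/

theorem LinearMap.finrank_range_le_of_ker_le {K V W W' : Type*} [DivisionRing K]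
    [AddCommGroup V] [Module K V] [FiniteDimensional K V] [AddCommGroup W] [Module K W]
    [AddCommGroup W'] [Module K W'] {f : V →ₗ[K] W} {g : V →ₗ[K] W'}
    (h : LinearMap.ker f ≤ LinearMap.ker g) :
    Module.finrank K (LinearMap.range g) ≤ Module.finrank K (LinearMap.range f) := by
  have hf := LinearMap.finrank_range_add_finrank_ker f
  have hg := LinearMap.finrank_range_add_finrank_ker g
  have := Submodule.finrank_mono h
  omega

theorem Matrix.rank_le_rank_of_ker_mulVecLin_le {K m m' n : Type*} [Field K] [Fintype n]
    {M : Matrix m n K} {N : Matrix m' n K}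
    (h : LinearMap.ker M.mulVecLin ≤ LinearMap.ker N.mulVecLin) : N.rank ≤ M.rank :=
  LinearMap.finrank_range_le_of_ker_le h

namespace Matrix.PosSemidef

open scoped ComplexOrder

variable {𝕜 n : Type*} [RCLike 𝕜] [Fintype n] {A B : Matrix n n 𝕜}

theorem mulVec_eq_zero_of_add_mulVec_eq_zero (hA : A.PosSemidef) (hB : B.PosSemidef)
    {x : n → 𝕜} (hx : (A + B) *ᵥ x = 0) : A *ᵥ x = 0 ∧ B *ᵥ x = 0 := by
  have hsum : star x ⬝ᵥ A *ᵥ x + star x ⬝ᵥ B *ᵥ x = 0 := by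
    rw [← dotProduct_add, ← add_mulVec, hx, dotProduct_zero]
  obtain ⟨hAx, hBx⟩ := (add_eq_zero_iff_of_nonneg (hA.dotProduct_mulVec_nonneg x)
    (hB.dotProduct_mulVec_nonneg x)).mp hsum
  exact ⟨(hA.dotProduct_mulVec_zero_iff x).mp hAx, (hB.dotProduct_mulVec_zero_iff x).mp hBx⟩

theorem ker_mulVecLin_add_le_ker_mulVecLin_add_smul (hA : A.PosSemidef) (hB : B.PosSemidef)
    (k : 𝕜) : LinearMap.ker (A + B).mulVecLin ≤ LinearMap.ker (A + k • B).mulVecLin := by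
  intro x hx
  obtain ⟨hAx, hBx⟩ := mulVec_eq_zero_of_add_mulVec_eq_zero hA hB hx
  rw [LinearMap.mem_ker, mulVecLin_apply, add_mulVec, smul_mulVec, hAx, hBx, smul_zero, add_zero]

end Matrix.PosSemidef

/-- The determinantal rank of the pencil ⟨A,B⟩, i.e. the maximum over k ∈ ℝ of
rank (A + k B), equals rank (A + B), for symmetric positive semidefinite A, B. -/
theorem determinantal_rank_eq_rank_add {n : ℕ} (A B : Matrix (Fin n) (Fin n) ℝ)
    (hA : A.PosSemidef) (hB : B.PosSemidef) :
    (∀ k : ℝ, (A + k • B).rank ≤ (A + B).rank) ∧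
      (∃ k : ℝ, (A + k • B).rank = (A + B).rank) :=
  ⟨fun k => rank_le_rank_of_ker_mulVecLin_le
      (hA.ker_mulVecLin_add_le_ker_mulVecLin_add_smul hB k),
    ⟨1, by rw [one_smul]⟩⟩
end

section
/- Let V₁₁, V₂, V₁₃ be linear subspaces of ℝⁿ with dim V₁₁ = d₁ < dim V₂ = d₂ < dim V₁₃ = d₃ and V₁₁ ⊆ V₁₃. Then there exists a linear subspace V₁₂ ⊆ ℝⁿ with V₁₁ ⊆ V₁₂ ⊆ V₁₃, dim V₁₂ = d₂, and V₁₂ ∩ V₂^⊥ ≠ {0} (equivalently, the largest sine of canonical angles between V₁₂ and V₂ equals 1). -/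
open Module

/-- Any intermediate dimension is achieved by an intermediate subspace. -/
lemma aux_exists_intermediate {K V : Type*} [Field K] [AddCommGroup V] [Module K V]
    [FiniteDimensional K V] (U T : Submodule K V) (hUT : U ≤ T) (k : ℕ)
    (hUk : finrank K U ≤ k) (hkT : k ≤ finrank K T) :
    ∃ W : Submodule K V, U ≤ W ∧ W ≤ T ∧ finrank K W = k := by
  induction k with
  | zero =>
    have : finrank K U = 0 := Nat.le_zero.mp hUk
    exact ⟨U, le_rfl, hUT, this⟩
  | succ m ih =>
    rcases Nat.lt_or_ge (finrank K U) (m+1) with h | h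
    · obtain ⟨W, hUW, hWT, hW⟩ := ih (Nat.lt_succ_iff.mp h) (le_of_lt hkT)
      -- W < T since finrank W = m < m+1 ≤ finrank T
      have hWT' : W < T := by
        rcases lt_or_eq_of_le hWT with h' | h'
        · exact h'
        · exfalso; rw [h'] at hW; omega
      obtain ⟨x, hxT, hxW⟩ := SetLike.exists_of_lt hWT'
      refine ⟨W ⊔ Submodule.span K {x}, le_trans hUW le_sup_left,
        sup_le hWT'.le (Submodule.span_le.mpr (by simpa using hxT)), ?_⟩
      have := Submodule.finrank_sup_add_finrank_inf_eq W (Submodule.span K {x})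
      have hinf : W ⊓ Submodule.span K {x} = ⊥ := by
        rw [Submodule.eq_bot_iff]
        rintro y ⟨hyW, hy⟩
        obtain ⟨c, rfl⟩ := Submodule.mem_span_singleton.mp hy
        rcases eq_or_ne c 0 with rfl | hc
        · simp
        · exact absurd (by simpa [smul_smul, inv_mul_cancel₀ hc] using W.smul_mem c⁻¹ hyW) hxW
      rw [hinf] at this
      have hx0 : x ≠ 0 := fun h => hxW (h ▸ W.zero_mem)
      rw [finrank_span_singleton hx0] at this
      simp at this
      omega
    · exact ⟨U, le_rfl, hUT, le_antisymm hUk h⟩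

/-- Given subspaces V₁₁ ⊆ V₁₃ and V₂ of ℝⁿ with dim V₁₁ = d₁ < dim V₂ = d₂ < dim V₁₃ = d₃,
there is a d₂-dimensional subspace V₁₂ with V₁₁ ⊆ V₁₂ ⊆ V₁₃ which contains a nonzero
vector orthogonal to V₂ (equivalently, ‖sin∠(V₁₂,V₂)‖ = 1). -/
theorem exists_intermediate_subspace_with_sine_one {n d₁ d₂ d₃ : ℕ}
    (V₁₁ V₂ V₁₃ : Submodule ℝ (EuclideanSpace ℝ (Fin n)))
    (h₁₁ : finrank ℝ V₁₁ = d₁) (h₂ : finrank ℝ V₂ = d₂) (h₁₃ : finrank ℝ V₁₃ = d₃)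
    (h12 : d₁ < d₂) (h23 : d₂ < d₃) (hsub : V₁₁ ≤ V₁₃) :
    ∃ V₁₂ : Submodule ℝ (EuclideanSpace ℝ (Fin n)),
      V₁₁ ≤ V₁₂ ∧ V₁₂ ≤ V₁₃ ∧ finrank ℝ V₁₂ = d₂ ∧
        ∃ v : EuclideanSpace ℝ (Fin n), v ≠ 0 ∧ v ∈ V₁₂ ⊓ V₂ᗮ := by
  -- find v ∈ V₁₃ ⊓ V₂ᗮ nonzero
  have hdim : 0 < finrank ℝ (V₁₃ ⊓ V₂ᗮ : Submodule ℝ (EuclideanSpace ℝ (Fin n))) := by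
    have h1 := Submodule.finrank_sup_add_finrank_inf_eq V₁₃ V₂ᗮ
    have h2 : finrank ℝ (V₁₃ ⊔ V₂ᗮ : Submodule ℝ (EuclideanSpace ℝ (Fin n)))
        ≤ finrank ℝ (EuclideanSpace ℝ (Fin n)) := Submodule.finrank_le _
    have h3 : finrank ℝ V₂ᗮ = finrank ℝ (EuclideanSpace ℝ (Fin n)) - d₂ := by
      have := Submodule.finrank_add_finrank_orthogonal (K := V₂)
      omega
    have h4 : d₂ ≤ finrank ℝ (EuclideanSpace ℝ (Fin n)) := h₂ ▸ Submodule.finrank_le _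
    omega
  haveI : Nontrivial (V₁₃ ⊓ V₂ᗮ : Submodule ℝ (EuclideanSpace ℝ (Fin n))) := finrank_pos_iff.mp hdim
  obtain ⟨⟨v, hv⟩, hv0⟩ := exists_ne (0 : (V₁₃ ⊓ V₂ᗮ : Submodule ℝ (EuclideanSpace ℝ (Fin n))))
  have hvne : v ≠ 0 := by
    intro h; apply hv0; exact Subtype.ext (by simpa using h)
  -- U = V₁₁ ⊔ span v
  set U : Submodule ℝ (EuclideanSpace ℝ (Fin n)) := V₁₁ ⊔ Submodule.span ℝ {v} with hU
  have hUle : U ≤ V₁₃ := sup_le hsub (Submodule.span_le.mpr (by simpa using hv.1))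
  have hUd : finrank ℝ U ≤ d₂ := by
    have := Submodule.finrank_sup_add_finrank_inf_eq V₁₁ (Submodule.span ℝ {v})
    rw [finrank_span_singleton hvne, h₁₁, ← hU] at this
    omega
  obtain ⟨W, hUW, hWT, hWd⟩ := aux_exists_intermediate U V₁₃ hUle d₂ hUd (by omega)
  refine ⟨W, le_trans le_sup_left hUW, hWT, hWd, v, hvne, ?_, hv.2⟩
  exact hUW (le_sup_right (a := V₁₁) (Submodule.mem_span_singleton_self v))
end

section
/- Let 1 ≤ d₁ ≤ n and 0 ≤ d₂ ≤ n. Let X be an n×d₁ real matrix of full column rank and V a d₂-dimensional subspace of ℝⁿ with orthogonal projector P_V. Then the maximal generalized Rayleigh quotient max_{v ≠ 0} (vᵀ Xᵀ(I − P_V)X v)/(vᵀ XᵀX v) equals ‖P_{col(X)}(I − P_V)‖². In particular, if d₁ ≤ d₂ it equals ‖sin∠(col(X), V)‖², and if d₁ > d₂ it equals 1. -/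
noncomputable section
open Matrix RealInnerProductSpace

/-- Orthogonal projector onto a subspace, as a continuous linear map on the whole space. -/
noncomputable def projCLM {ι : Type*} [Fintype ι] (W : Submodule ℝ (EuclideanSpace ℝ ι)) :
    EuclideanSpace ℝ ι →L[ℝ] EuclideanSpace ℝ ι :=
  W.subtypeL.comp (W.orthogonalProjection)

/-- The largest sine of canonical angles, ‖sin∠(V,W)‖ = ‖P_V (I − P_W)‖. -/
noncomputable def sinAngle {ι : Type*} [Fintype ι]
    (V W : Submodule ℝ (EuclideanSpace ℝ ι)) : ℝ :=
  ‖(projCLM V).comp (ContinuousLinearMap.id ℝ (EuclideanSpace ℝ ι) - projCLM W)‖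

/-- Column space of a matrix, as a subspace of Euclidean space. -/
noncomputable def colSpaceE {ι κ : Type*} [Fintype ι] [Fintype κ] [DecidableEq κ]
    (M : Matrix ι κ ℝ) : Submodule ℝ (EuclideanSpace ℝ ι) :=
  LinearMap.range (Matrix.toEuclideanLin M)

/-! With `C = col X` and `P = P_{Vᗮ} = I - P_V`, the quotient at `v` is `‖P y‖² / ‖y‖²` for
`y = X v ∈ C`, so its maximum is the squared norm of `P` restricted to `C`, namely
`‖P P_C‖² = ‖P_C P‖²` (an operator and its adjoint have the same norm); the maximum is attained
by compactness of the unit sphere of `C`. When `d₂ < d₁`, counting dimensions gives a nonzero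
`x ∈ C ⊓ Vᗮ`, which `P_C P` fixes, so this product of projections has norm `1`. -/

theorem projCLM_eq_starProjection {ι : Type*} [Fintype ι]
    (W : Submodule ℝ (EuclideanSpace ℝ ι)) : projCLM W = W.starProjection := rfl

theorem id_sub_projCLM {ι : Type*} [Fintype ι] (W : Submodule ℝ (EuclideanSpace ℝ ι)) :
    ContinuousLinearMap.id ℝ (EuclideanSpace ℝ ι) - projCLM W = Wᗮ.starProjection :=
  W.starProjection_orthogonal.symm

theorem finrank_colSpaceE {ι κ : Type*} [Fintype ι] [Fintype κ] [DecidableEq κ]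
    (M : Matrix ι κ ℝ) : Module.finrank ℝ (colSpaceE M) = M.rank :=
  (M.rank_eq_finrank_range_toLin (EuclideanSpace.basisFun ι ℝ).toBasis
    (EuclideanSpace.basisFun κ ℝ).toBasis).symm

namespace ContinuousLinearMap

variable {E F : Type*} [NormedAddCommGroup E] [NormedSpace ℝ E]
  [SeminormedAddCommGroup F] [NormedSpace ℝ F]

theorem norm_apply_sq_div_norm_sq_le (f : E →L[ℝ] F) (x : E) :
    ‖f x‖ ^ 2 / ‖x‖ ^ 2 ≤ ‖f‖ ^ 2 :=
  div_le_of_le_mul₀ (by positivity) (by positivity) <| by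
    rw [← mul_pow]
    exact pow_le_pow_left₀ (norm_nonneg _) (f.le_opNorm x) 2

theorem exists_norm_eq_one_norm_apply_eq_opNorm [FiniteDimensional ℝ E] [Nontrivial E]
    (f : E →L[ℝ] F) : ∃ x, ‖x‖ = 1 ∧ ‖f x‖ = ‖f‖ := by
  obtain ⟨x, hx, hfx⟩ := ((isCompact_sphere (0 : E) 1).image
    (continuous_norm.comp f.continuous)).sSup_mem
    ((NormedSpace.sphere_nonempty.mpr zero_le_one).image _)
  exact ⟨x, mem_sphere_zero_iff_norm.mp hx, hfx.trans f.sSup_sphere_eq_norm⟩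

end ContinuousLinearMap

namespace Submodule

variable {E F : Type*} [NormedAddCommGroup E] [InnerProductSpace ℝ E]
  [SeminormedAddCommGroup F] [NormedSpace ℝ F]

theorem inf_orthogonal_ne_bot_of_finrank_lt [FiniteDimensional ℝ E] {U V : Submodule ℝ E}
    (h : Module.finrank ℝ V < Module.finrank ℝ U) : U ⊓ Vᗮ ≠ ⊥ := by
  intro hbot
  have := finrank_add_finrank_le_of_disjoint (disjoint_iff.mpr hbot)
  have := V.finrank_add_finrank_orthogonal
  omega

theorem norm_comp_starProjection (K : Submodule ℝ E) [K.HasOrthogonalProjection]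
    (f : E →L[ℝ] F) : ‖f ∘L K.starProjection‖ = ‖f ∘L K.subtypeL‖ := by
  have hrestrict : f ∘L K.subtypeL = (f ∘L K.starProjection) ∘L K.subtypeL := by
    ext x
    simp
  refine le_antisymm ?_ ?_
  · calc ‖f ∘L K.starProjection‖ = ‖(f ∘L K.subtypeL) ∘L K.orthogonalProjectionOnto‖ := rfl
      _ ≤ ‖f ∘L K.subtypeL‖ * ‖K.orthogonalProjectionOnto‖ := ContinuousLinearMap.opNorm_comp_le _ _
      _ ≤ ‖f ∘L K.subtypeL‖ :=
        mul_le_of_le_one_right (f ∘L K.subtypeL).opNorm_nonneg K.orthogonalProjectionOnto_norm_le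
  · calc ‖f ∘L K.subtypeL‖ = ‖(f ∘L K.starProjection) ∘L K.subtypeL‖ := by rw [← hrestrict]
      _ ≤ ‖f ∘L K.starProjection‖ * ‖K.subtypeL‖ := ContinuousLinearMap.opNorm_comp_le _ _
      _ ≤ ‖f ∘L K.starProjection‖ :=
        mul_le_of_le_one_right (f ∘L K.starProjection).opNorm_nonneg K.norm_subtypeL_le

theorem exists_mem_norm_eq_one_norm_apply_eq_norm_comp_starProjection (K : Submodule ℝ E)
    [FiniteDimensional ℝ K] (hK : K ≠ ⊥) (f : E →L[ℝ] F) :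
    ∃ x ∈ K, ‖x‖ = 1 ∧ ‖f x‖ = ‖f ∘L K.starProjection‖ := by
  have : Nontrivial K := nontrivial_iff_ne_bot.mpr hK
  obtain ⟨x, hx, hfx⟩ := (f ∘L K.subtypeL).exists_norm_eq_one_norm_apply_eq_opNorm
  exact ⟨x, x.2, hx, hfx.trans (K.norm_comp_starProjection f).symm⟩

theorem real_inner_starProjection_self (K : Submodule ℝ E) [K.HasOrthogonalProjection] (x : E) :
    ⟪x, K.starProjection x⟫ = ‖K.starProjection x‖ ^ 2 := by
  rw [← real_inner_self_eq_norm_sq, K.inner_starProjection_left_eq_right,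
    K.starProjection_eq_self_iff.mpr (K.starProjection_apply_mem x)]

theorem norm_starProjection_comp_starProjection_eq_one (U W : Submodule ℝ E)
    [U.HasOrthogonalProjection] [W.HasOrthogonalProjection] (h : U ⊓ W ≠ ⊥) :
    ‖U.starProjection ∘L W.starProjection‖ = 1 := by
  obtain ⟨x, ⟨hxU, hxW⟩, hx0⟩ := exists_mem_ne_zero_of_ne_bot h
  have hfix : (U.starProjection ∘L W.starProjection) x = x := by
    simp [starProjection_eq_self_iff.mpr hxU, starProjection_eq_self_iff.mpr hxW]
  refine le_antisymm ?_ ?_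
  · calc ‖U.starProjection ∘L W.starProjection‖
        ≤ ‖U.starProjection‖ * ‖W.starProjection‖ := ContinuousLinearMap.opNorm_comp_le _ _
      _ ≤ 1 := mul_le_one₀ U.starProjection_norm_le (norm_nonneg _) W.starProjection_norm_le
  · have hx := (U.starProjection ∘L W.starProjection).le_opNorm x
    rw [hfix] at hx
    exact le_of_mul_le_mul_right (by rwa [one_mul]) (norm_pos_iff.mpr hx0)

variable [CompleteSpace E]

theorem norm_starProjection_comp_starProjection_comm (U W : Submodule ℝ E)
    [U.HasOrthogonalProjection] [W.HasOrthogonalProjection] :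
    ‖U.starProjection ∘L W.starProjection‖ = ‖W.starProjection ∘L U.starProjection‖ := by
  rw [← LinearIsometryEquiv.norm_map ContinuousLinearMap.adjoint,
    ContinuousLinearMap.adjoint_comp, (isSelfAdjoint_starProjection U).adjoint_eq,
    (isSelfAdjoint_starProjection W).adjoint_eq]

end Submodule

theorem isGreatest_inner_starProjection_div_inner_self {E F : Type*} [NormedAddCommGroup E]
    [InnerProductSpace ℝ E] [CompleteSpace E] [AddCommGroup F] [Module ℝ F] (A : F →ₗ[ℝ] E)
    [FiniteDimensional ℝ (LinearMap.range A)] (hA : LinearMap.range A ≠ ⊥)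
    (W : Submodule ℝ E) [W.HasOrthogonalProjection] :
    IsGreatest {r | ∃ v, v ≠ 0 ∧ r = ⟪A v, W.starProjection (A v)⟫ / ⟪A v, A v⟫}
      (‖(LinearMap.range A).starProjection ∘L W.starProjection‖ ^ 2) := by
  set C := LinearMap.range A
  obtain ⟨y, ⟨v, rfl⟩, hy1, hy⟩ :=
    C.exists_mem_norm_eq_one_norm_apply_eq_norm_comp_starProjection hA W.starProjection
  rw [Submodule.norm_starProjection_comp_starProjection_comm]
  refine ⟨⟨v, fun hv => by simp [hv] at hy1, ?_⟩, ?_⟩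
  · rw [Submodule.real_inner_starProjection_self, real_inner_self_eq_norm_sq, hy1, hy,
      one_pow, div_one]
  · rintro r ⟨w, -, rfl⟩
    have hw : C.starProjection (A w) = A w := C.starProjection_eq_self_iff.mpr ⟨w, rfl⟩
    have hbound := (W.starProjection ∘L C.starProjection).norm_apply_sq_div_norm_sq_le (A w)
    rw [ContinuousLinearMap.comp_apply, hw] at hbound
    rwa [Submodule.real_inner_starProjection_self, real_inner_self_eq_norm_sq]

theorem rayleigh_max_eq_sin_sq_general {n d₁ d₂ : ℕ} (hd₁ : 1 ≤ d₁)
    (X : Matrix (Fin n) (Fin d₁) ℝ) (hrank : X.rank = d₁)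
    (V : Submodule ℝ (EuclideanSpace ℝ (Fin n))) (hV : Module.finrank ℝ V = d₂) :
    IsGreatest
      {r : ℝ | ∃ v : EuclideanSpace ℝ (Fin d₁), v ≠ 0 ∧
        r = ⟪Matrix.toEuclideanLin X v,
              (ContinuousLinearMap.id ℝ (EuclideanSpace ℝ (Fin n)) - projCLM V)
                (Matrix.toEuclideanLin X v)⟫ /
            ⟪Matrix.toEuclideanLin X v, Matrix.toEuclideanLin X v⟫}
      (‖(projCLM (colSpaceE X)).comp
          (ContinuousLinearMap.id ℝ (EuclideanSpace ℝ (Fin n)) - projCLM V)‖ ^ 2) ∧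
    (d₁ ≤ d₂ →
      ‖(projCLM (colSpaceE X)).comp
          (ContinuousLinearMap.id ℝ (EuclideanSpace ℝ (Fin n)) - projCLM V)‖ ^ 2
        = sinAngle (colSpaceE X) V ^ 2) ∧
    (d₂ < d₁ →
      ‖(projCLM (colSpaceE X)).comp
          (ContinuousLinearMap.id ℝ (EuclideanSpace ℝ (Fin n)) - projCLM V)‖ ^ 2 = 1) := by
  have hC : Module.finrank ℝ (colSpaceE X) = d₁ := (finrank_colSpaceE X).trans hrank
  refine ⟨?_, fun _ => rfl, fun hlt => ?_⟩ <;> rw [id_sub_projCLM, projCLM_eq_starProjection]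
  · exact isGreatest_inner_starProjection_div_inner_self (Matrix.toEuclideanLin X)
      (Submodule.one_le_finrank_iff.mp (hC.symm ▸ hd₁)) Vᗮ
  · rw [Submodule.norm_starProjection_comp_starProjection_eq_one _ _
      (Submodule.inf_orthogonal_ne_bot_of_finrank_lt (by omega)), one_pow]

/-- For a full-column-rank n×d₁ matrix X and a d₂-dimensional subspace V of ℝⁿ,
the maximum of v ↦ (vᵀXᵀ(I − P_V)Xv)/(vᵀXᵀXv) over v ≠ 0 equals
‖P_{col X}(I − P_V)‖²; if d₁ ≤ d₂ this is ‖sin∠(col X, V)‖², and if d₁ > d₂ it is 1. -/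
theorem rayleigh_max_eq_sin_sq {n d₁ d₂ : ℕ} (hd₁ : 1 ≤ d₁) (hd₁n : d₁ ≤ n) (hd₂n : d₂ ≤ n)
    (X : Matrix (Fin n) (Fin d₁) ℝ) (hrank : X.rank = d₁)
    (V : Submodule ℝ (EuclideanSpace ℝ (Fin n))) (hV : Module.finrank ℝ V = d₂) :
    IsGreatest
      {r : ℝ | ∃ v : EuclideanSpace ℝ (Fin d₁), v ≠ 0 ∧
        r = ⟪Matrix.toEuclideanLin X v,
              (ContinuousLinearMap.id ℝ (EuclideanSpace ℝ (Fin n)) - projCLM V)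
                (Matrix.toEuclideanLin X v)⟫ /
            ⟪Matrix.toEuclideanLin X v, Matrix.toEuclideanLin X v⟫}
      (‖(projCLM (colSpaceE X)).comp
          (ContinuousLinearMap.id ℝ (EuclideanSpace ℝ (Fin n)) - projCLM V)‖ ^ 2) ∧
    (d₁ ≤ d₂ →
      ‖(projCLM (colSpaceE X)).comp
          (ContinuousLinearMap.id ℝ (EuclideanSpace ℝ (Fin n)) - projCLM V)‖ ^ 2
        = sinAngle (colSpaceE X) V ^ 2) ∧
    (d₂ < d₁ →
      ‖(projCLM (colSpaceE X)).comp
          (ContinuousLinearMap.id ℝ (EuclideanSpace ℝ (Fin n)) - projCLM V)‖ ^ 2 = 1) :=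
  rayleigh_max_eq_sin_sq_general hd₁ X hrank V hV
end
end

section
/- Let A and B be n×n real symmetric positive semidefinite matrices admitting a simultaneous diagonalization A = (T⁻¹)ᵀΛT⁻¹, B = (T⁻¹)ᵀMT⁻¹ with T nonsingular, Λ = diag(λ₁,…,λₙ), M = diag(μ₁,…,μₙ), all λᵢ, μᵢ ≥ 0, and λᵢ = 0 whenever μᵢ = 0 for indices with νᵢ defined. Define νᵢ = λᵢ/μᵢ if μᵢ > 0, νᵢ = 0 if λᵢ = 0, νᵢ = +∞ if λᵢ > 0 and μᵢ = 0, and assume ν₁ ≤ … ≤ νₙ. Then for each i with νᵢ < ∞, νᵢ is the smallest λ ≥ 0 for which there exists an i-dimensional subspace V of ℝⁿ such that the quadratic form of A − λB restricted to V is negative semidefinite; moreover the minimum is attained for V the span of the first i columns of T. -/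
/-!
In the coordinates `x = T⁻¹ v` the form of `A - l • B` is `∑ j, (lam j - l * mu j) * x j ^ 2`,
and for `l ≥ 0` the coefficient `lam j - l * mu j` is nonpositive exactly when `ν j ≤ l`.
Since `ν` is monotone, at `l = ν i` the coefficients of the coordinates `j ≤ i` are nonpositive,
so the form is nonpositive on the span of the columns `j ≤ i` of `T`. For `l < ν i` the
coefficients of the coordinates `j ≥ i` are positive, so the form is positive on the nonzero
vectors of the span of the columns `j ≥ i`, which has dimension `n - i` and hence meets every
subspace of dimension `i + 1` nontrivially.
-/

open Matrix

namespace Matrix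

variable {m ι R : Type*} [Fintype ι] [DecidableEq ι]

def colSpan [Semiring R] {n : Type*} (T : Matrix m n R) (s : Set n) : Submodule R (m → R) :=
  Submodule.span R {c | ∃ j ∈ s, c = fun r => T r j}

theorem dotProduct_transpose_mul_diagonal_mul_mulVec [Fintype m] [CommSemiring R]
    (S : Matrix ι m R) (d : ι → R) (v : m → R) :
    v ⬝ᵥ (Sᵀ * diagonal d * S) *ᵥ v = ∑ j, d j * (S *ᵥ v) j ^ 2 := by
  rw [← mulVec_mulVec, ← mulVec_mulVec, dotProduct_mulVec, vecMul_transpose]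
  simp only [dotProduct, mulVec_diagonal, sq]
  exact Finset.sum_congr rfl fun j _ => by ring

theorem inv_mulVec_apply_eq_zero_of_mem_colSpan [CommRing R] {T : Matrix ι ι R}
    (hT : IsUnit T.det) {s : Set ι} {v : ι → R} (hv : v ∈ T.colSpan s) {j : ι} (hj : j ∉ s) :
    (T⁻¹ *ᵥ v) j = 0 := by
  induction hv using Submodule.span_induction with
  | mem c hc =>
    obtain ⟨k, hk, rfl⟩ := hc
    have hcol : (fun r => T r k) = T *ᵥ Pi.single k 1 := (mulVec_single_one T k).symm
    rw [hcol, mulVec_mulVec, nonsing_inv_mul T hT, one_mulVec,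
      Pi.single_eq_of_ne (ne_of_mem_of_not_mem hk hj).symm]
  | zero => simp
  | add x y _ _ hx hy => simp [mulVec_add, hx, hy]
  | smul a x _ hx => simp [mulVec_smul, hx]

theorem finrank_colSpan {K : Type*} [Field K] {T : Matrix ι ι K} (hT : IsUnit T.det) (s : Set ι) :
    Module.finrank K (T.colSpan s) = Nat.card s := by
  classical
  have hli : LinearIndependent K fun j : s => fun r => T r j :=
    (linearIndependent_cols_iff_isUnit.2 ((isUnit_iff_isUnit_det T).2 hT)).comp _
      Subtype.val_injective
  have hset : {c | ∃ j ∈ s, c = fun r => T r j} = Set.range fun j : s => fun r => T r j := by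
    ext c; simp [eq_comm]
  rw [colSpan, hset, finrank_span_eq_card hli, Nat.card_eq_fintype_card]

section Ordered

variable {K : Type*} [Field K] [LinearOrder K] [IsStrictOrderedRing K] {T : Matrix ι ι K}
  {d : ι → K} {s : Set ι} {v : ι → K}

theorem dotProduct_mulVec_nonpos_of_mem_colSpan (hT : IsUnit T.det)
    (hd : ∀ j ∈ s, d j ≤ 0) (hv : v ∈ T.colSpan s) :
    v ⬝ᵥ ((T⁻¹)ᵀ * diagonal d * T⁻¹) *ᵥ v ≤ 0 := by
  rw [dotProduct_transpose_mul_diagonal_mul_mulVec]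
  refine Finset.sum_nonpos fun j _ => ?_
  by_cases hj : j ∈ s
  · exact mul_nonpos_of_nonpos_of_nonneg (hd j hj) (sq_nonneg _)
  · simp [inv_mulVec_apply_eq_zero_of_mem_colSpan hT hv hj]

theorem dotProduct_mulVec_pos_of_mem_colSpan (hT : IsUnit T.det)
    (hd : ∀ j ∈ s, 0 < d j) (hv : v ∈ T.colSpan s) (hv0 : v ≠ 0) :
    0 < v ⬝ᵥ ((T⁻¹)ᵀ * diagonal d * T⁻¹) *ᵥ v := by
  have hsupp : ∀ j ∉ s, (T⁻¹ *ᵥ v) j = 0 := fun j hj =>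
    inv_mulVec_apply_eq_zero_of_mem_colSpan hT hv hj
  have hcoord : T⁻¹ *ᵥ v ≠ 0 := fun h => hv0 <| by
    rw [← one_mulVec v, ← mul_nonsing_inv T hT, ← mulVec_mulVec, h, mulVec_zero]
  obtain ⟨k, hk⟩ := Function.ne_iff.1 hcoord
  have hks : k ∈ s := by_contra fun hks => hk (hsupp k hks)
  rw [dotProduct_transpose_mul_diagonal_mul_mulVec]
  refine Finset.sum_pos' (fun j _ => ?_)
    ⟨k, Finset.mem_univ _, mul_pos (hd k hks) (sq_pos_of_ne_zero hk)⟩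
  by_cases hj : j ∈ s
  · exact mul_nonneg (hd j hj).le (sq_nonneg _)
  · simp [hsupp j hj]

end Ordered

end Matrix

theorem Submodule.exists_mem_ne_zero_of_finrank_lt_add {K V : Type*} [DivisionRing K]
    [AddCommGroup V] [Module K V] [FiniteDimensional K V] {s t : Submodule K V}
    (h : Module.finrank K V < Module.finrank K s + Module.finrank K t) :
    ∃ x ∈ s ⊓ t, x ≠ 0 :=
  Submodule.exists_mem_ne_zero_of_ne_bot fun hst =>
    h.not_ge (Submodule.finrank_add_finrank_le_of_disjoint (disjoint_iff.2 hst))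

theorem sub_mul_nonpos_iff_le_ofReal {a b t : ℝ} {ν : ENNReal} (ha : 0 ≤ a) (hb : 0 ≤ b)
    (ht : 0 ≤ t) (hν₁ : 0 < b → ν = ENNReal.ofReal (a / b)) (hν₂ : a = 0 → ν = 0)
    (hν₃ : 0 < a → b = 0 → ν = ⊤) :
    a - t * b ≤ 0 ↔ ν ≤ ENNReal.ofReal t := by
  rcases hb.lt_or_eq with hb | rfl
  · rw [hν₁ hb, ENNReal.ofReal_le_ofReal_iff ht, div_le_iff₀ hb, sub_nonpos]
  rcases ha.lt_or_eq with ha | rfl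
  · simp [hν₃ ha rfl, ha.not_ge]
  · simp [hν₂ rfl]

theorem generalized_eigenvalue_minimax_general {n : ℕ}
    (A B T : Matrix (Fin n) (Fin n) ℝ) (hT : IsUnit T.det)
    (lam mu : Fin n → ℝ) (hlam : ∀ i, 0 ≤ lam i) (hmu : ∀ i, 0 ≤ mu i)
    (hAdec : A = (T⁻¹)ᵀ * Matrix.diagonal lam * T⁻¹)
    (hBdec : B = (T⁻¹)ᵀ * Matrix.diagonal mu * T⁻¹)
    (ν : Fin n → ENNReal)
    (hν1 : ∀ i, 0 < mu i → ν i = ENNReal.ofReal (lam i / mu i))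
    (hν2 : ∀ i, lam i = 0 → ν i = 0)
    (hν3 : ∀ i, 0 < lam i → mu i = 0 → ν i = ⊤)
    (hνmono : Monotone ν) :
    ∀ i : Fin n, ν i ≠ ⊤ →
      (IsLeast
        {l : ℝ | 0 ≤ l ∧ ∃ V : Submodule ℝ (Fin n → ℝ),
          Module.finrank ℝ V = (i : ℕ) + 1 ∧
          ∀ v ∈ V, v ⬝ᵥ (A - l • B).mulVec v ≤ 0}
        ((ν i).toReal)) ∧
      (Module.finrank ℝ
          (Submodule.span ℝ {c : Fin n → ℝ | ∃ j : Fin n, j ≤ i ∧ c = fun r => T r j})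
        = (i : ℕ) + 1) ∧
      (∀ v ∈ Submodule.span ℝ {c : Fin n → ℝ | ∃ j : Fin n, j ≤ i ∧ c = fun r => T r j},
        v ⬝ᵥ (A - (ν i).toReal • B).mulVec v ≤ 0) := by
  intro i hi
  have hpencil (l : ℝ) :
      A - l • B = (T⁻¹)ᵀ * diagonal (fun j => lam j - l * mu j) * T⁻¹ := by
    rw [hAdec, hBdec, ← Matrix.smul_mul, ← Matrix.mul_smul, ← Matrix.sub_mul, ← Matrix.mul_sub,
      ← diagonal_smul, ← diagonal_sub]
    rfl
  have hcoeff (l : ℝ) (hl : 0 ≤ l) (j : Fin n) :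
      lam j - l * mu j ≤ 0 ↔ ν j ≤ ENNReal.ofReal l :=
    sub_mul_nonpos_iff_le_ofReal (hlam j) (hmu j) hl (hν1 j) (hν2 j) (hν3 j)
  have hdim : Module.finrank ℝ (T.colSpan (Set.Iic i)) = i + 1 := by
    simp [finrank_colSpan hT]
  have hneg : ∀ v ∈ T.colSpan (Set.Iic i), v ⬝ᵥ (A - (ν i).toReal • B) *ᵥ v ≤ 0 := by
    intro v hv
    rw [hpencil]
    refine dotProduct_mulVec_nonpos_of_mem_colSpan hT (fun j hj => ?_) hv
    rw [hcoeff _ ENNReal.toReal_nonneg, ENNReal.ofReal_toReal hi]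
    exact hνmono hj
  refine ⟨⟨⟨ENNReal.toReal_nonneg, _, hdim, hneg⟩, ?_⟩, hdim, hneg⟩
  rintro l ⟨hl, V, hV, hVneg⟩
  by_contra! hlt
  obtain ⟨v, ⟨hvV, hvW⟩, hv0⟩ :=
    Submodule.exists_mem_ne_zero_of_finrank_lt_add (s := V) (t := T.colSpan (Set.Ici i))
      (by simp [hV, finrank_colSpan hT]; omega)
  refine (hVneg v hvV).not_gt ?_
  rw [hpencil]
  refine dotProduct_mulVec_pos_of_mem_colSpan hT (fun j hj => ?_) hvW hv0
  rw [← not_le, hcoeff l hl, not_le]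
  calc ENNReal.ofReal l < ν i := (ENNReal.ofReal_lt_iff_lt_toReal hl hi).2 hlt
    _ ≤ ν j := hνmono hj

/-- For simultaneously diagonalized PSD matrices A = (T⁻¹)ᵀΛT⁻¹, B = (T⁻¹)ᵀMT⁻¹ with
generalized eigenvalues νᵢ (νᵢ = λᵢ/μᵢ if μᵢ>0, 0 if λᵢ=0, ∞ if λᵢ>0 and μᵢ=0)
arranged in ascending order: for each i with νᵢ < ∞, νᵢ is the least λ ≥ 0 such that
A − λB is negative semidefinite on some (i+1)-dimensional subspace, and the minimum is
attained at the span of the first i+1 columns of T. -/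
theorem generalized_eigenvalue_minimax {n : ℕ}
    (A B T : Matrix (Fin n) (Fin n) ℝ) (hT : IsUnit T.det)
    (lam mu : Fin n → ℝ) (hlam : ∀ i, 0 ≤ lam i) (hmu : ∀ i, 0 ≤ mu i)
    (hAdec : A = (T⁻¹)ᵀ * Matrix.diagonal lam * T⁻¹)
    (hBdec : B = (T⁻¹)ᵀ * Matrix.diagonal mu * T⁻¹)
    (hA : A.PosSemidef) (hB : B.PosSemidef)
    (ν : Fin n → ENNReal)
    (hν1 : ∀ i, 0 < mu i → ν i = ENNReal.ofReal (lam i / mu i))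
    (hν2 : ∀ i, lam i = 0 → ν i = 0)
    (hν3 : ∀ i, 0 < lam i → mu i = 0 → ν i = ⊤)
    (hνmono : Monotone ν) :
    ∀ i : Fin n, ν i ≠ ⊤ →
      (IsLeast
        {l : ℝ | 0 ≤ l ∧ ∃ V : Submodule ℝ (Fin n → ℝ),
          Module.finrank ℝ V = (i : ℕ) + 1 ∧
          ∀ v ∈ V, v ⬝ᵥ (A - l • B).mulVec v ≤ 0}
        ((ν i).toReal)) ∧
      (Module.finrank ℝ
          (Submodule.span ℝ {c : Fin n → ℝ | ∃ j : Fin n, j ≤ i ∧ c = fun r => T r j})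
        = (i : ℕ) + 1) ∧
      (∀ v ∈ Submodule.span ℝ {c : Fin n → ℝ | ∃ j : Fin n, j ≤ i ∧ c = fun r => T r j},
        v ⬝ᵥ (A - (ν i).toReal • B).mulVec v ≤ 0) :=
  generalized_eigenvalue_minimax_general A B T hT lam mu hlam hmu hAdec hBdec ν hν1 hν2 hν3 hνmono
end

section
/- Let A and B be n×n real symmetric positive semidefinite matrices with rank(A+B) = rank(B), with simultaneous diagonalization A = (T⁻¹)ᵀΛT⁻¹, B = (T⁻¹)ᵀMT⁻¹ where the first defect(B) diagonal entries of Λ and M are zero, the remaining diagonal entries μᵢ of M are positive, and T = [T₁ T₂] satisfies T₁ᵀT₂ = 0 (T₁ has defect(B) columns). Then the Moore–Penrose pseudoinverse of B is B⁺ = T M⁺ Tᵀ, where M⁺ = diag(0,…,0, μ_{defect(B)+1}⁻¹, …, μₙ⁻¹). -/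
open Matrix

/-- Under a simultaneous diagonalization A = (T⁻¹)ᵀΛT⁻¹, B = (T⁻¹)ᵀMT⁻¹ with
rank(A+B) = rank(B), where the first defect(B) = n − rank(B) diagonal entries of Λ and M
vanish, the remaining entries of M are positive, and the first defect(B) columns of T are
orthogonal to the remaining ones, the matrix T M⁺ Tᵀ (with M⁺ inverting the positive μᵢ)
is the Moore–Penrose pseudoinverse of B, i.e. it satisfies the four Penrose conditions. -/
theorem pseudoinverse_of_simultaneous_diagonalization {n : ℕ}
    (A B T : Matrix (Fin n) (Fin n) ℝ) (hT : IsUnit T.det)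
    (lam mu : Fin n → ℝ)
    (hAdec : A = (T⁻¹)ᵀ * Matrix.diagonal lam * T⁻¹)
    (hBdec : B = (T⁻¹)ᵀ * Matrix.diagonal mu * T⁻¹)
    (hA : A.PosSemidef) (hB : B.PosSemidef)
    (hrank : (A + B).rank = B.rank)
    (hzero : ∀ i : Fin n, (i : ℕ) < n - B.rank → lam i = 0 ∧ mu i = 0)
    (hpos : ∀ i : Fin n, n - B.rank ≤ (i : ℕ) → 0 < mu i)
    (horth : ∀ i j : Fin n, (i : ℕ) < n - B.rank → n - B.rank ≤ (j : ℕ) →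
      (fun r => T r i) ⬝ᵥ (fun r => T r j) = 0) :
    B * (T * Matrix.diagonal (fun i : Fin n => if (i : ℕ) < n - B.rank then 0 else (mu i)⁻¹) * Tᵀ)
        * B = B ∧
    (T * Matrix.diagonal (fun i : Fin n => if (i : ℕ) < n - B.rank then 0 else (mu i)⁻¹) * Tᵀ) * B
        * (T * Matrix.diagonal (fun i : Fin n => if (i : ℕ) < n - B.rank then 0 else (mu i)⁻¹) * Tᵀ)
      = T * Matrix.diagonal (fun i : Fin n => if (i : ℕ) < n - B.rank then 0 else (mu i)⁻¹) * Tᵀ ∧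
    (B * (T * Matrix.diagonal (fun i : Fin n => if (i : ℕ) < n - B.rank then 0 else (mu i)⁻¹) * Tᵀ))ᵀ
      = B * (T * Matrix.diagonal (fun i : Fin n => if (i : ℕ) < n - B.rank then 0 else (mu i)⁻¹) * Tᵀ) ∧
    ((T * Matrix.diagonal (fun i : Fin n => if (i : ℕ) < n - B.rank then 0 else (mu i)⁻¹) * Tᵀ) * B)ᵀ
      = (T * Matrix.diagonal (fun i : Fin n => if (i : ℕ) < n - B.rank then 0 else (mu i)⁻¹) * Tᵀ) * B := by
  have hTi : T * T⁻¹ = 1 := mul_nonsing_inv T hT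
  have hTi' : T⁻¹ * T = 1 := nonsing_inv_mul T hT
  set d := n - B.rank with hd
  set p : Fin n → ℝ := fun i : Fin n => if (i : ℕ) < d then 0 else (mu i)⁻¹ with hp
  set e : Fin n → ℝ := fun i : Fin n => if (i : ℕ) < d then 0 else 1 with he
  set P := T * Matrix.diagonal p * Tᵀ with hP
  -- diagonal identities
  have hmp : Matrix.diagonal mu * Matrix.diagonal p = Matrix.diagonal e := by
    rw [diagonal_mul_diagonal]
    refine congrArg Matrix.diagonal (funext fun i => ?_)
    by_cases h : (i : ℕ) < d
    · simp [hp, he, h, (hzero i h).2]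
    · simp [hp, he, h, mul_inv_cancel₀ (hpos i (le_of_not_gt h)).ne']
  have hpm : Matrix.diagonal p * Matrix.diagonal mu = Matrix.diagonal e := by
    rw [diagonal_mul_diagonal]
    refine congrArg Matrix.diagonal (funext fun i => ?_)
    by_cases h : (i : ℕ) < d
    · simp [hp, he, h]
    · simp [hp, he, h, inv_mul_cancel₀ (hpos i (le_of_not_gt h)).ne']
  have hem : Matrix.diagonal e * Matrix.diagonal mu = Matrix.diagonal mu := by
    rw [diagonal_mul_diagonal]
    refine congrArg Matrix.diagonal (funext fun i => ?_)
    by_cases h : (i : ℕ) < d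
    · simp [he, h, (hzero i h).2]
    · simp [he, h]
  have hep : Matrix.diagonal e * Matrix.diagonal p = Matrix.diagonal p := by
    rw [diagonal_mul_diagonal]
    refine congrArg Matrix.diagonal (funext fun i => ?_)
    by_cases h : (i : ℕ) < d
    · simp [hp, he, h]
    · simp [he, h]
  -- Tᵀ * T commutes with diagonal e
  have hTT : ∀ i j : Fin n, ((i : ℕ) < d → d ≤ (j : ℕ) → (Tᵀ * T) i j = 0) := by
    intro i j hi hj
    have := horth i j hi hj
    simpa [mul_apply, transpose_apply, dotProduct] using this
  have hTTsymm : (Tᵀ * T)ᵀ = Tᵀ * T := by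
    rw [transpose_mul, transpose_transpose]
  have hcomm : Tᵀ * T * Matrix.diagonal e = Matrix.diagonal e * (Tᵀ * T) := by
    ext i j
    rw [mul_diagonal, diagonal_mul]
    by_cases hi : (i : ℕ) < d <;> by_cases hj : (j : ℕ) < d
    · simp [he, hi, hj]
    · have := hTT i j hi (le_of_not_gt hj)
      simp [he, hi, hj, this]
    · have h0 : (Tᵀ * T) j i = 0 := hTT j i hj (le_of_not_gt hi)
      have : (Tᵀ * T) i j = 0 := by
        have := congrFun (congrFun hTTsymm i) j
        rw [transpose_apply] at this
        rw [← this, h0]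
      simp [he, hi, hj, this]
    · simp [he, hi, hj]
  -- two representations of B * P and P * B
  have hBP : B * P = (T⁻¹)ᵀ * Matrix.diagonal e * Tᵀ := by
    rw [hBdec, hP]
    calc (T⁻¹)ᵀ * Matrix.diagonal mu * T⁻¹ * (T * Matrix.diagonal p * Tᵀ)
        = (T⁻¹)ᵀ * Matrix.diagonal mu * (T⁻¹ * T) * (Matrix.diagonal p * Tᵀ) := by
          simp only [Matrix.mul_assoc]
      _ = (T⁻¹)ᵀ * (Matrix.diagonal mu * Matrix.diagonal p) * Tᵀ := by
          rw [hTi']; simp only [Matrix.mul_one, Matrix.mul_assoc]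
      _ = (T⁻¹)ᵀ * Matrix.diagonal e * Tᵀ := by rw [hmp]
  have hPB : P * B = T * Matrix.diagonal e * T⁻¹ := by
    rw [hBdec, hP]
    have hT2 : Tᵀ * (T⁻¹)ᵀ = 1 := by
      rw [← transpose_mul, hTi', transpose_one]
    calc T * Matrix.diagonal p * Tᵀ * ((T⁻¹)ᵀ * Matrix.diagonal mu * T⁻¹)
        = T * Matrix.diagonal p * (Tᵀ * (T⁻¹)ᵀ) * (Matrix.diagonal mu * T⁻¹) := by
          simp only [Matrix.mul_assoc]
      _ = T * (Matrix.diagonal p * Matrix.diagonal mu) * T⁻¹ := by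
          rw [hT2]; simp only [Matrix.mul_one, Matrix.mul_assoc]
      _ = T * Matrix.diagonal e * T⁻¹ := by rw [hpm]
  have hrep : (T⁻¹)ᵀ * Matrix.diagonal e * Tᵀ = T * Matrix.diagonal e * T⁻¹ := by
    have h1 : (T⁻¹)ᵀ * Tᵀ = 1 := by rw [← transpose_mul, hTi, transpose_one]
    calc (T⁻¹)ᵀ * Matrix.diagonal e * Tᵀ
        = (T⁻¹)ᵀ * Matrix.diagonal e * (Tᵀ * (T * T⁻¹)) := by rw [hTi, Matrix.mul_one]
      _ = (T⁻¹)ᵀ * (Matrix.diagonal e * (Tᵀ * T)) * T⁻¹ := by simp only [Matrix.mul_assoc]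
      _ = (T⁻¹)ᵀ * (Tᵀ * T * Matrix.diagonal e) * T⁻¹ := by rw [hcomm]
      _ = ((T⁻¹)ᵀ * Tᵀ) * (T * Matrix.diagonal e) * T⁻¹ := by simp only [Matrix.mul_assoc]
      _ = T * Matrix.diagonal e * T⁻¹ := by rw [h1, Matrix.one_mul, Matrix.mul_assoc]
  refine ⟨?_, ?_, ?_, ?_⟩
  · -- B * P * B = B
    rw [hBP, hBdec]
    have hT2 : Tᵀ * (T⁻¹)ᵀ = 1 := by rw [← transpose_mul, hTi', transpose_one]
    calc (T⁻¹)ᵀ * Matrix.diagonal e * Tᵀ * ((T⁻¹)ᵀ * Matrix.diagonal mu * T⁻¹)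
        = (T⁻¹)ᵀ * Matrix.diagonal e * (Tᵀ * (T⁻¹)ᵀ) * (Matrix.diagonal mu * T⁻¹) := by
          simp only [Matrix.mul_assoc]
      _ = (T⁻¹)ᵀ * (Matrix.diagonal e * Matrix.diagonal mu) * T⁻¹ := by
          rw [hT2]; simp only [Matrix.mul_one, Matrix.mul_assoc]
      _ = (T⁻¹)ᵀ * Matrix.diagonal mu * T⁻¹ := by rw [hem]
  · -- P * B * P = P
    rw [hPB, hP]
    calc T * Matrix.diagonal e * T⁻¹ * (T * Matrix.diagonal p * Tᵀ)
        = T * Matrix.diagonal e * (T⁻¹ * T) * (Matrix.diagonal p * Tᵀ) := by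
          simp only [Matrix.mul_assoc]
      _ = T * (Matrix.diagonal e * Matrix.diagonal p) * Tᵀ := by
          rw [hTi']; simp only [Matrix.mul_one, Matrix.mul_assoc]
      _ = T * Matrix.diagonal p * Tᵀ := by rw [hep]
  · -- symmetry of B * P
    rw [hBP]
    calc ((T⁻¹)ᵀ * Matrix.diagonal e * Tᵀ)ᵀ
        = T * Matrix.diagonal e * T⁻¹ := by
          simp [transpose_mul, diagonal_transpose, Matrix.mul_assoc]
      _ = (T⁻¹)ᵀ * Matrix.diagonal e * Tᵀ := hrep.symm
  · -- symmetry of P * B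
    rw [hPB]
    calc (T * Matrix.diagonal e * T⁻¹)ᵀ
        = (T⁻¹)ᵀ * Matrix.diagonal e * Tᵀ := by
          simp [transpose_mul, diagonal_transpose, Matrix.mul_assoc]
      _ = T * Matrix.diagonal e * T⁻¹ := hrep
end

section
/- Let C be an m×(n+d) real matrix, Σ an (n+d)×(n+d) real symmetric positive semidefinite matrix, and X an (n+d)×d matrix with rank X = d. The system of constraints Δ(I − P_Σ) = 0 and (C − Δ)X = 0 in an m×(n+d) matrix Δ is solvable if and only if col(XᵀCᵀ) ⊆ col(XᵀΣ). -/
open Matrix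

/-- P is the Moore–Penrose pseudoinverse of M (the four Penrose conditions). -/
def IsMoorePenrose {a b : ℕ} (M : Matrix (Fin a) (Fin b) ℝ) (P : Matrix (Fin b) (Fin a) ℝ) :
    Prop :=
  M * P * M = M ∧ P * M * P = P ∧ (M * P)ᵀ = M * P ∧ (P * M)ᵀ = P * M

/-- Column space of a matrix. -/
def colSpace {a b : ℕ} (M : Matrix (Fin a) (Fin b) ℝ) : Submodule ℝ (Fin a → ℝ) :=
  LinearMap.range M.mulVecLin

/-!
Since `P_Σ = ΣΣ⁺` is symmetric and fixes the columns of `Σ`, the first constraint says exactly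
that `Δ = (ΣZ)ᵀ` for some `Z`. Substituting into the second, `(C − (ΣZ)ᵀ)X = 0` transposes to
`XᵀΣZ = XᵀCᵀ`, which is solvable in `Z` iff `col(XᵀCᵀ) ⊆ col(XᵀΣ)`.
-/

namespace Matrix

variable {R : Type*} {l m n : Type*}

theorem range_mulVecLin_le_iff_exists_mul_eq [CommSemiring R] [Fintype n] [Fintype l]
    [DecidableEq l] (A : Matrix m l R) (B : Matrix m n R) :
    LinearMap.range A.mulVecLin ≤ LinearMap.range B.mulVecLin ↔ ∃ Y : Matrix n l R, B * Y = A := by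
  constructor
  · intro h
    have hcol : ∀ j, ∃ y : n → R, B *ᵥ y = A *ᵥ Pi.single j 1 := fun j =>
      h (LinearMap.mem_range_self _ _)
    choose y hy using hcol
    refine ⟨(of y)ᵀ, ext_of_mulVec_single fun j => ?_⟩
    rw [← mulVec_mulVec, mulVec_single_one, ← hy]
    rfl
  · rintro ⟨Y, rfl⟩
    rw [mulVecLin_mul]
    exact LinearMap.range_comp_le_range _ _

theorem mul_one_sub_mul_eq_zero_iff [CommRing R] [Fintype m] [DecidableEq m] [Fintype n]
    {M : Matrix m n R} {P : Matrix n m R} (hMPM : M * P * M = M) (hMP : (M * P)ᵀ = M * P)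
    (Δ : Matrix l m R) :
    Δ * (1 - M * P) = 0 ↔ ∃ Z : Matrix n l R, (M * Z)ᵀ = Δ := by
  rw [Matrix.mul_sub, Matrix.mul_one, sub_eq_zero]
  constructor
  · intro hΔ
    refine ⟨P * Δᵀ, ?_⟩
    rw [← Matrix.mul_assoc, transpose_mul, transpose_transpose, hMP]
    exact hΔ.symm
  · rintro ⟨Z, rfl⟩
    rw [← hMP, ← transpose_mul, ← Matrix.mul_assoc, hMPM]

end Matrix

theorem tls_constraints_solvable_iff_general {m n d : ℕ}
    (C : Matrix (Fin m) (Fin (n + d)) ℝ)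
    (Sg : Matrix (Fin (n + d)) (Fin (n + d)) ℝ)
    (Sp : Matrix (Fin (n + d)) (Fin (n + d)) ℝ) (hSp : IsMoorePenrose Sg Sp)
    (X : Matrix (Fin (n + d)) (Fin d) ℝ) :
    (∃ Δ : Matrix (Fin m) (Fin (n + d)) ℝ,
        Δ * (1 - Sg * Sp) = 0 ∧ (C - Δ) * X = 0) ↔
      colSpace (Xᵀ * Cᵀ) ≤ colSpace (Xᵀ * Sg) := by
  obtain ⟨hSgSpSg, -, hSgSp, -⟩ := hSp
  have transpose_constraint (Z : Matrix (Fin (n + d)) (Fin m) ℝ) :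
      C * X = (Sg * Z)ᵀ * X ↔ Xᵀ * Sg * Z = Xᵀ * Cᵀ := by
    rw [← transpose_inj, eq_comm]
    simp only [transpose_mul, transpose_transpose, Matrix.mul_assoc]
  simp_rw [mul_one_sub_mul_eq_zero_iff hSgSpSg hSgSp, Matrix.sub_mul, sub_eq_zero,
    exists_exists_eq_and, transpose_constraint]
  rw [colSpace, colSpace, range_mulVecLin_le_iff_exists_mul_eq]

/-- The constraints Δ(I − P_Σ) = 0, (C − Δ)X = 0 (with P_Σ = ΣΣ⁺) are solvable in Δ
iff col(XᵀCᵀ) ⊆ col(XᵀΣ). -/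
theorem tls_constraints_solvable_iff {m n d : ℕ}
    (C : Matrix (Fin m) (Fin (n + d)) ℝ)
    (Sg : Matrix (Fin (n + d)) (Fin (n + d)) ℝ) (hSg : Sg.PosSemidef)
    (Sp : Matrix (Fin (n + d)) (Fin (n + d)) ℝ) (hSp : IsMoorePenrose Sg Sp)
    (X : Matrix (Fin (n + d)) (Fin d) ℝ) (hX : X.rank = d) :
    (∃ Δ : Matrix (Fin m) (Fin (n + d)) ℝ,
        Δ * (1 - Sg * Sp) = 0 ∧ (C - Δ) * X = 0) ↔
      colSpace (Xᵀ * Cᵀ) ≤ colSpace (Xᵀ * Sg) :=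
  tls_constraints_solvable_iff_general C Sg Sp hSp X
end

section
/- Let C be m×(n+d), Σ be (n+d)×(n+d) symmetric positive semidefinite, and X be (n+d)×d of rank d such that col(XᵀCᵀ) ⊆ col(XᵀΣ). Set Δ* = C X (XᵀΣX)⁺ Xᵀ Σ. Then (i) Δ*(I − P_Σ) = 0 and (C − Δ*)X = 0; (ii) Δ* Σ⁺ Δ*ᵀ = C X (XᵀΣX)⁺ Xᵀ Cᵀ; (iii) for every Δ satisfying Δ(I − P_Σ) = 0 and (C − Δ)X = 0, one has Δ Σ⁺ Δᵀ ≥ C X (XᵀΣX)⁺ Xᵀ Cᵀ in the Loewner order. -/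
open Matrix

/-! Put Δ* = C X G Xᵀ Σ. For feasible Δ the constraints say Σ Σ⁺ Δᵀ = Δᵀ and Xᵀ Δᵀ = Xᵀ Cᵀ, so the
cross term Δ* Σ⁺ Δᵀ = C X G Xᵀ Cᵀ does not depend on Δ; once Δ* is feasible this gives
Δ Σ⁺ Δᵀ − C X G Xᵀ Cᵀ = (Δ − Δ*) Σ⁺ (Δ − Δ*)ᵀ ≥ 0. Feasibility of Δ* reduces, through the
compatibility condition C X = Wᵀ Σ X, to Σ X G (XᵀΣX) = Σ X, which holds for every generalized
inverse G: writing Σ = BᴴB, the Gram identity (BX)ᴴ(BX) Y = 0 forces BX Y = 0. -/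

namespace Matrix

open scoped ComplexOrder

variable {𝕜 : Type*} [RCLike 𝕜] {k l n : Type*} [Fintype k] [Fintype l] [Fintype n]

open scoped MatrixOrder in
theorem PosSemidef.mul_mul_gram_eq_of_mul_mul_eq {S : Matrix n n 𝕜} (hS : S.PosSemidef)
    (X : Matrix n k 𝕜) {G : Matrix k k 𝕜}
    (hG : Xᴴ * S * X * G * (Xᴴ * S * X) = Xᴴ * S * X) :
    S * X * G * (Xᴴ * S * X) = S * X := by
  classical
  obtain ⟨B, rfl⟩ := CStarAlgebra.nonneg_iff_eq_star_mul_self.mp hS.nonneg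
  rw [star_eq_conjTranspose] at hG ⊢
  have hBX : B * X * (G * ((B * X)ᴴ * (B * X)) - 1) = 0 := by
    rw [← conjTranspose_mul_self_mul_eq_zero, Matrix.mul_sub, Matrix.mul_one, sub_eq_zero]
    simpa only [conjTranspose_mul, Matrix.mul_assoc] using hG
  rw [Matrix.mul_sub, Matrix.mul_one, sub_eq_zero] at hBX
  simpa only [conjTranspose_mul, Matrix.mul_assoc] using congrArg (Bᴴ * ·) hBX

theorem PosSemidef.sub_mul_mul_conjTranspose {P : Matrix n n 𝕜} (hP : P.PosSemidef)
    {A B : Matrix l n 𝕜} (hBA : B * P * Aᴴ = B * P * Bᴴ) :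
    (A * P * Aᴴ - B * P * Bᴴ).PosSemidef := by
  have hAB : A * P * Bᴴ = B * P * Bᴴ := by
    simpa only [conjTranspose_mul, conjTranspose_conjTranspose, hP.1.eq, Matrix.mul_assoc]
      using congrArg (·ᴴ) hBA
  have hsq : A * P * Aᴴ - B * P * Bᴴ = (A - B) * P * (A - B)ᴴ := by
    rw [conjTranspose_sub, Matrix.sub_mul, Matrix.sub_mul, Matrix.mul_sub, Matrix.mul_sub, hAB,
      hBA]
    abel
  rw [hsq]
  exact hP.mul_mul_conjTranspose_same _

end Matrix

namespace IsMoorePenrose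

variable {a b : ℕ}

theorem unique {M : Matrix (Fin a) (Fin b) ℝ} {P Q : Matrix (Fin b) (Fin a) ℝ}
    (hP : IsMoorePenrose M P) (hQ : IsMoorePenrose M Q) : P = Q := by
  obtain ⟨hP₁, hP₂, hP₃, hP₄⟩ := hP
  obtain ⟨hQ₁, hQ₂, hQ₃, hQ₄⟩ := hQ
  have hMP : M * P = M * Q :=
    calc M * P = (M * Q)ᵀ * (M * P)ᵀ := by rw [hQ₃, hP₃, ← Matrix.mul_assoc, hQ₁]
    _ = (M * P * M * Q)ᵀ := by simp only [transpose_mul, Matrix.mul_assoc]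
    _ = M * Q := by rw [hP₁, hQ₃]
  have hPM : P * M = Q * M :=
    calc P * M = (P * M)ᵀ * (Q * M)ᵀ := by
          rw [hP₄, hQ₄, Matrix.mul_assoc, ← Matrix.mul_assoc M, hQ₁]
    _ = (Q * (M * P * M))ᵀ := by simp only [transpose_mul, Matrix.mul_assoc]
    _ = Q * M := by rw [hP₁, hQ₄]
  calc P = P * M * P := hP₂.symm
  _ = Q * M * Q := by rw [Matrix.mul_assoc, hMP, ← Matrix.mul_assoc, hPM]
  _ = Q := hQ₂

theorem transpose {M : Matrix (Fin a) (Fin b) ℝ} {P : Matrix (Fin b) (Fin a) ℝ}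
    (hP : IsMoorePenrose M P) : IsMoorePenrose Mᵀ Pᵀ := by
  obtain ⟨h₁, h₂, h₃, h₄⟩ := hP
  refine ⟨?_, ?_, ?_, ?_⟩ <;>
    simp only [← transpose_mul, transpose_transpose, Matrix.mul_assoc] at * <;>
    simp only [h₁, h₂, h₃, h₄]

variable {M P : Matrix (Fin a) (Fin a) ℝ}

theorem transpose_eq_self (hM : Mᵀ = M) (hP : IsMoorePenrose M P) : Pᵀ = P :=
  (hM ▸ hP.transpose).unique hP

theorem mul_comm (hM : Mᵀ = M) (hP : IsMoorePenrose M P) : P * M = M * P := by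
  rw [← hP.2.2.2, transpose_mul, hM, hP.transpose_eq_self hM]

theorem mul_one_sub_mul_eq_zero (hM : Mᵀ = M) (hP : IsMoorePenrose M P) :
    M * (1 - M * P) = 0 := by
  rw [Matrix.mul_sub, Matrix.mul_one, ← hP.mul_comm hM, ← Matrix.mul_assoc, hP.1, sub_self]

theorem mul_mul_transpose_eq_of_mul_one_sub_eq_zero {c : ℕ} (hM : Mᵀ = M)
    (hP : IsMoorePenrose M P) {Δ : Matrix (Fin c) (Fin a) ℝ} (hΔ : Δ * (1 - M * P) = 0) :
    M * P * Δᵀ = Δᵀ := by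
  rw [Matrix.mul_sub, Matrix.mul_one, sub_eq_zero] at hΔ
  conv_rhs => rw [hΔ, ← hP.mul_comm hM]
  rw [transpose_mul, transpose_mul, hM, hP.transpose_eq_self hM, Matrix.mul_assoc]

theorem posSemidef (hM : M.PosSemidef) (hP : IsMoorePenrose M P) : P.PosSemidef := by
  have hPT : Pᵀ = P := hP.transpose_eq_self hM.1
  simpa only [conjTranspose_eq_transpose_of_trivial, hPT, hP.2.1] using
    hM.mul_mul_conjTranspose_same P

end IsMoorePenrose

theorem exists_mul_eq_of_colSpace_le {a b c : ℕ} {A : Matrix (Fin a) (Fin b) ℝ}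
    {B : Matrix (Fin a) (Fin c) ℝ} (h : colSpace A ≤ colSpace B) :
    ∃ W : Matrix (Fin c) (Fin b) ℝ, B * W = A := by
  have hcol : ∀ j, ∃ w, B *ᵥ w = Aᵀ j := fun j =>
    h ⟨Pi.single j 1, by ext i; simp [mulVec_single]⟩
  choose w hw using hcol
  refine ⟨(Matrix.of w)ᵀ, Matrix.ext fun i j => ?_⟩
  simpa [mul_apply, mulVec, dotProduct] using congrFun (hw j) i

theorem mul_mul_gram_eq_of_colSpace_le {k m d : ℕ} {Sg : Matrix (Fin k) (Fin k) ℝ}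
    (hSg : Sg.PosSemidef) {C : Matrix (Fin m) (Fin k) ℝ} {X : Matrix (Fin k) (Fin d) ℝ}
    {G : Matrix (Fin d) (Fin d) ℝ} (hG : Xᵀ * Sg * X * G * (Xᵀ * Sg * X) = Xᵀ * Sg * X)
    (hC : colSpace (Xᵀ * Cᵀ) ≤ colSpace (Xᵀ * Sg)) :
    C * X * G * (Xᵀ * Sg * X) = C * X := by
  have hSgT : Sgᵀ = Sg := hSg.1
  obtain ⟨W, hW⟩ := exists_mul_eq_of_colSpace_le hC
  have hCX : Wᵀ * (Sg * X) = C * X := by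
    simpa only [transpose_mul, transpose_transpose, hSgT, Matrix.mul_assoc] using
      congrArg (·ᵀ) hW
  have hSgX : Sg * X * G * (Xᵀ * Sg * X) = Sg * X := hSg.mul_mul_gram_eq_of_mul_mul_eq X hG
  rw [← hCX]
  simp only [Matrix.mul_assoc] at hSgX ⊢
  rw [hSgX]

theorem tls_least_element_general {m n d : ℕ}
    (C : Matrix (Fin m) (Fin (n + d)) ℝ)
    (Sg : Matrix (Fin (n + d)) (Fin (n + d)) ℝ) (hSg : Sg.PosSemidef)
    (Sp : Matrix (Fin (n + d)) (Fin (n + d)) ℝ) (hSp : IsMoorePenrose Sg Sp)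
    (X : Matrix (Fin (n + d)) (Fin d) ℝ)
    (G : Matrix (Fin d) (Fin d) ℝ) (hG : IsMoorePenrose (Xᵀ * Sg * X) G)
    (hcompat : colSpace (Xᵀ * Cᵀ) ≤ colSpace (Xᵀ * Sg)) :
    ((C * X * G * Xᵀ * Sg) * (1 - Sg * Sp) = 0 ∧ (C - C * X * G * Xᵀ * Sg) * X = 0) ∧
    (C * X * G * Xᵀ * Sg) * Sp * (C * X * G * Xᵀ * Sg)ᵀ = C * X * G * Xᵀ * Cᵀ ∧
    ∀ Δ : Matrix (Fin m) (Fin (n + d)) ℝ,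
      Δ * (1 - Sg * Sp) = 0 → (C - Δ) * X = 0 →
        (Δ * Sp * Δᵀ - C * X * G * Xᵀ * Cᵀ).PosSemidef := by
  have hSgT : Sgᵀ = Sg := hSg.1
  have hcross : ∀ Δ : Matrix (Fin m) (Fin (n + d)) ℝ, Δ * (1 - Sg * Sp) = 0 →
      (C - Δ) * X = 0 → C * X * G * Xᵀ * Sg * Sp * Δᵀ = C * X * G * Xᵀ * Cᵀ := by
    intro Δ hΔ hΔX
    rw [Matrix.sub_mul, sub_eq_zero] at hΔX
    simp only [Matrix.mul_assoc] at hΔX ⊢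
    rw [← Matrix.mul_assoc Sg, hSp.mul_mul_transpose_eq_of_mul_one_sub_eq_zero hSgT hΔ,
      ← transpose_mul, ← hΔX, transpose_mul]
  have hΔs₁ : C * X * G * Xᵀ * Sg * (1 - Sg * Sp) = 0 := by
    rw [Matrix.mul_assoc, hSp.mul_one_sub_mul_eq_zero hSgT, Matrix.mul_zero]
  have hΔs₂ : (C - C * X * G * Xᵀ * Sg) * X = 0 := by
    rw [Matrix.sub_mul, sub_eq_zero, eq_comm]
    simpa only [Matrix.mul_assoc] using mul_mul_gram_eq_of_colSpace_le hSg hG.1 hcompat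
  have hΔs := hcross _ hΔs₁ hΔs₂
  refine ⟨⟨hΔs₁, hΔs₂⟩, hΔs, fun Δ hΔ hΔX => ?_⟩
  rw [← hΔs]
  exact (hSp.posSemidef hSg).sub_mul_mul_conjTranspose ((hcross Δ hΔ hΔX).trans hΔs.symm)

/-- The least element of {Δ Σ⁺ Δᵀ : Δ(I − P_Σ) = 0, (C − Δ)X = 0} in the Loewner order:
with Δ* = C X (XᵀΣX)⁺ Xᵀ Σ one has (i) Δ* satisfies the constraints,
(ii) Δ* Σ⁺ Δ*ᵀ = C X (XᵀΣX)⁺ Xᵀ Cᵀ, and (iii) every feasible Δ satisfies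
Δ Σ⁺ Δᵀ ≥ C X (XᵀΣX)⁺ Xᵀ Cᵀ. -/
theorem tls_least_element {m n d : ℕ}
    (C : Matrix (Fin m) (Fin (n + d)) ℝ)
    (Sg : Matrix (Fin (n + d)) (Fin (n + d)) ℝ) (hSg : Sg.PosSemidef)
    (Sp : Matrix (Fin (n + d)) (Fin (n + d)) ℝ) (hSp : IsMoorePenrose Sg Sp)
    (X : Matrix (Fin (n + d)) (Fin d) ℝ) (hX : X.rank = d)
    (G : Matrix (Fin d) (Fin d) ℝ) (hG : IsMoorePenrose (Xᵀ * Sg * X) G)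
    (hcompat : colSpace (Xᵀ * Cᵀ) ≤ colSpace (Xᵀ * Sg)) :
    ((C * X * G * Xᵀ * Sg) * (1 - Sg * Sp) = 0 ∧ (C - C * X * G * Xᵀ * Sg) * X = 0) ∧
    (C * X * G * Xᵀ * Sg) * Sp * (C * X * G * Xᵀ * Sg)ᵀ = C * X * G * Xᵀ * Cᵀ ∧
    ∀ Δ : Matrix (Fin m) (Fin (n + d)) ℝ,
      Δ * (1 - Sg * Sp) = 0 → (C - Δ) * X = 0 →
        (Δ * Sp * Δᵀ - C * X * G * Xᵀ * Cᵀ).PosSemidef :=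
  tls_least_element_general C Sg hSg Sp hSp X G hG hcompat
end

section
/- Let C be m×(n+d) and Σ be (n+d)×(n+d) symmetric positive semidefinite such that CᵀC + Σ is positive definite (a definite pencil), and let X be an (n+d)×d matrix of rank d. Then the constraints Δ(I − P_Σ) = 0 and (C − Δ)X = 0 are compatible if and only if the d×d matrix XᵀΣX is nonsingular. -/
open Matrix

/-!
If `Δ(I − ΣΣ⁺) = 0` then `Δ` vanishes on `ker Σ`. Were `XᵀΣX` singular, some `v ≠ 0` would give
`ΣXv = 0` (as `Σ ⪰ 0`), hence `ΔXv = 0` and so `CXv = ΔXv = 0`; then `Xv` lies in the kernel of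
the definite pencil `CᵀC + Σ`, so `Xv = 0`, contradicting the full column rank of `X`.
Conversely, if `XᵀΣX` is invertible, `Δ = CX(XᵀΣX)⁻¹XᵀΣ` satisfies both constraints.
-/

namespace IsMoorePenrose

variable {a b : ℕ} {M : Matrix (Fin a) (Fin b) ℝ} {P : Matrix (Fin b) (Fin a) ℝ}

theorem mul_pinv_eq (h : IsMoorePenrose M P) : M * P = Pᵀ * Mᵀ := by
  rw [← h.2.2.1, transpose_mul]

theorem transpose_mul_one_sub_mul_pinv (h : IsMoorePenrose M P) : Mᵀ * (1 - M * P) = 0 := by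
  rw [Matrix.mul_sub, Matrix.mul_one, sub_eq_zero, eq_comm]
  calc Mᵀ * (M * P) = Mᵀ * (M * P)ᵀ := by rw [h.2.2.1]
    _ = (M * P * M)ᵀ := by rw [transpose_mul (M * P) M]
    _ = Mᵀ := by rw [h.1]

theorem mulVec_eq_zero_of_mul_one_sub_mul_pinv {k : ℕ} (h : IsMoorePenrose M P)
    {Δ : Matrix (Fin k) (Fin a) ℝ} (hΔ : Δ * (1 - M * P) = 0) {w : Fin a → ℝ}
    (hw : Mᵀ *ᵥ w = 0) : Δ *ᵥ w = 0 := by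
  rw [Matrix.mul_sub, Matrix.mul_one, sub_eq_zero] at hΔ
  rw [hΔ, h.mul_pinv_eq, ← Matrix.mul_assoc, ← mulVec_mulVec, hw, mulVec_zero]

end IsMoorePenrose

open scoped ComplexOrder in
theorem Matrix.PosSemidef.mulVec_mulVec_eq_zero {𝕜 : Type*} [RCLike 𝕜] {m n : Type*}
    [Fintype m] [Fintype n] {A : Matrix n n 𝕜} (hA : A.PosSemidef) (B : Matrix n m 𝕜)
    {v : m → 𝕜} (hv : (Bᴴ * A * B) *ᵥ v = 0) : A *ᵥ (B *ᵥ v) = 0 := by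
  refine (hA.dotProduct_mulVec_zero_iff (B *ᵥ v)).mp ?_
  rw [star_mulVec, ← dotProduct_mulVec, mulVec_mulVec, mulVec_mulVec, hv, dotProduct_zero]

theorem Matrix.mulVec_injective_of_rank_eq_card {K : Type*} [Field K] {m n : Type*} [Fintype n]
    {X : Matrix m n K} (hX : X.rank = Fintype.card n) : Function.Injective X.mulVec := by
  rw [mulVec_injective_iff, linearIndependent_iff_card_eq_finrank_span, ← hX,
    rank_eq_finrank_span_cols, Set.finrank]

theorem Matrix.eq_zero_of_posDef_transpose_mul_self_add {K : Type*} [Field K] [PartialOrder K]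
    [StarRing K] {m n : Type*} [Fintype m] [Fintype n] {C : Matrix m n K} {S : Matrix n n K}
    (h : (Cᵀ * C + S).PosDef) {w : n → K} (hC : C *ᵥ w = 0) (hS : S *ᵥ w = 0) : w = 0 := by
  classical
  refine mulVec_injective_of_isUnit h.isUnit ?_
  rw [add_mulVec, ← mulVec_mulVec, hC, hS, mulVec_zero, mulVec_zero, add_zero]

/-- For a definite pencil (CᵀC + Σ positive definite) and X of full column rank d,
the constraints Δ(I − P_Σ) = 0 and (C − Δ)X = 0 are compatible iff XᵀΣX is nonsingular. -/
theorem tls_constraints_compatible_iff_nonsingular {m n d : ℕ}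
    (C : Matrix (Fin m) (Fin (n + d)) ℝ)
    (Sg : Matrix (Fin (n + d)) (Fin (n + d)) ℝ) (hSg : Sg.PosSemidef)
    (Sp : Matrix (Fin (n + d)) (Fin (n + d)) ℝ) (hSp : IsMoorePenrose Sg Sp)
    (hdef : (Cᵀ * C + Sg).PosDef)
    (X : Matrix (Fin (n + d)) (Fin d) ℝ) (hX : X.rank = d) :
    (∃ Δ : Matrix (Fin m) (Fin (n + d)) ℝ,
        Δ * (1 - Sg * Sp) = 0 ∧ (C - Δ) * X = 0) ↔
      IsUnit (Xᵀ * Sg * X).det := by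
  have hSgT : Sgᵀ = Sg := hSg.1
  constructor
  · rintro ⟨Δ, hΔ, hCX⟩
    refine isUnit_iff_ne_zero.mpr fun hdet => ?_
    obtain ⟨v, hv0, hv⟩ := exists_mulVec_eq_zero_iff.mpr hdet
    have hSgv : Sg *ᵥ (X *ᵥ v) = 0 := hSg.mulVec_mulVec_eq_zero X hv
    have hΔv : Δ *ᵥ (X *ᵥ v) = 0 :=
      hSp.mulVec_eq_zero_of_mul_one_sub_mul_pinv hΔ (by rwa [hSgT])
    have hCv : C *ᵥ (X *ᵥ v) = 0 := by
      rw [Matrix.sub_mul, sub_eq_zero] at hCX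
      rw [mulVec_mulVec, hCX, ← mulVec_mulVec, hΔv]
    have hXv : X *ᵥ v = 0 := eq_zero_of_posDef_transpose_mul_self_add hdef hCv hSgv
    exact hv0 <| mulVec_injective_of_rank_eq_card (by rwa [Fintype.card_fin])
      (hXv.trans (mulVec_zero X).symm)
  · intro hdet
    refine ⟨C * X * (Xᵀ * Sg * X)⁻¹ * (Xᵀ * Sg), ?_, ?_⟩
    · have hSg_kernel : Sg * (1 - Sg * Sp) = 0 := by
        simpa only [hSgT] using hSp.transpose_mul_one_sub_mul_pinv
      simp only [Matrix.mul_assoc, hSg_kernel, Matrix.mul_zero]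
    · rw [Matrix.sub_mul, sub_eq_zero, Matrix.mul_assoc _ (Xᵀ * Sg), Matrix.mul_assoc,
        Matrix.nonsing_inv_mul _ hdet, Matrix.mul_one]
end

section
/- Let N = C₀ᵀC₀ + λ_min(A₀ᵀA₀)·I where C₀ = [A₀, A₀X₀] is m×(n+d), A₀ᵀA₀ is nonsingular, and eigenvalues are counted in ascending order. Then N is positive definite, N(X₀;−I) = λ_min(A₀ᵀA₀)(X₀;−I), the eigenvalues of N^{-1/2}C₀ᵀC₀N^{-1/2} satisfy λⱼ = 0 for j = 1,…,d and 1/2 ≤ λⱼ ≤ 1 for j = d+1,…,n+d, and consequently n/2 ≤ trace(C₀N⁻¹C₀ᵀ) ≤ n. -/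
noncomputable section
open Matrix

/-- Eigenvalues of a Hermitian matrix, sorted in ascending order. -/
noncomputable def sortedEig {n : ℕ} {M : Matrix (Fin n) (Fin n) ℝ} (hM : M.IsHermitian) :
    Fin n → ℝ :=
  hM.eigenvalues ∘ Tuple.sort hM.eigenvalues

/-- The square root of a positive semidefinite matrix, as defined in the older Mathlib. -/
noncomputable def Matrix.PosSemidef.sqrt {n : Type*} [Fintype n] [DecidableEq n]
    {M : Matrix n n ℝ} (hM : M.PosSemidef) : Matrix n n ℝ :=
  hM.1.eigenvectorUnitary.1 * diagonal ((↑) ∘ Real.sqrt ∘ hM.1.eigenvalues) *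
    (star hM.1.eigenvectorUnitary : Matrix n n ℝ)

/-!
Write `M = C₀ᵀC₀`, `c = λ_min(A₀ᵀA₀) > 0` and `N = M + c I = S²`. If `K = S⁻¹MS⁻¹` has
eigenvector `w` with eigenvalue `μ`, then `v = S⁻¹w` solves `Mv = μ(Mv + cv)`, so `μ ∈ [0, 1)` and
either `μ = 0` or `v` is an eigenvector of `M` with eigenvalue `κ = μc/(1 - μ) ≠ 0`. Since
`C₀ = A₀[I, X₀]`, such a `v` lies in the row space of `[I, X₀]`, on which `‖[I, X₀]v‖ ≥ ‖v‖`;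
hence `κ‖v‖² = ‖A₀[I, X₀]v‖² ≥ c‖v‖²`, i.e. `κ ≥ c` and `μ ≥ 1/2`. As `rank K = rank C₀ = n`,
exactly `d` eigenvalues vanish, and `trace(C₀N⁻¹C₀ᵀ) = trace K` is a sum of `n` numbers in
`[1/2, 1]`.
-/

namespace Matrix

section Spectral

variable {ι : Type*} [Fintype ι] [DecidableEq ι]

lemma PosSemidef.sqrt_mul_self {M : Matrix ι ι ℝ} (hM : M.PosSemidef) :
    hM.sqrt * hM.sqrt = M := by
  have hD : diagonal ((↑) ∘ Real.sqrt ∘ hM.1.eigenvalues) *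
      diagonal ((↑) ∘ Real.sqrt ∘ hM.1.eigenvalues) =
      diagonal (RCLike.ofReal (K := ℝ) ∘ hM.1.eigenvalues) := by
    simp [diagonal_mul_diagonal, Real.mul_self_sqrt (hM.eigenvalues_nonneg _)]
  conv_rhs => rw [hM.1.spectral_theorem, Unitary.conjStarAlgAut_apply, ← hD]
  simp only [PosSemidef.sqrt, Matrix.mul_assoc]
  rw [← Matrix.mul_assoc (star _), Unitary.coe_star_mul_self, Matrix.one_mul]

lemma PosSemidef.isHermitian_sqrt {M : Matrix ι ι ℝ} (hM : M.PosSemidef) :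
    hM.sqrt.IsHermitian := by
  simpa [PosSemidef.sqrt, star_eq_conjTranspose] using
    isHermitian_mul_mul_conjTranspose (hM.1.eigenvectorUnitary : Matrix ι ι ℝ)
      (isHermitian_diagonal_of_self_adjoint _ (by simp [IsSelfAdjoint, star_trivial]))

lemma IsHermitian.mul_dotProduct_self_le {H : Matrix ι ι ℝ} (hH : H.IsHermitian) {c : ℝ}
    (hc : ∀ i, c ≤ hH.eigenvalues i) (x : ι → ℝ) : c * (x ⬝ᵥ x) ≤ x ⬝ᵥ (H *ᵥ x) := by
  have hpsd : (H - algebraMap ℝ _ c).PosSemidef := by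
    refine posSemidef_iff_isHermitian_and_spectrum_nonneg.mpr ⟨?_, ?_⟩
    · simpa [algebraMap_eq_diagonal] using hH.sub (isHermitian_diagonal _)
    · rw [← spectrum.sub_singleton_eq, hH.spectrum_real_eq_range_eigenvalues]
      rintro _ ⟨_, ⟨i, rfl⟩, _, rfl, rfl⟩
      exact sub_nonneg.mpr (hc i)
  have := hpsd.dotProduct_mulVec_nonneg x
  simp only [star_trivial, sub_mulVec, dotProduct_sub, algebraMap_eq_diagonal,
    Pi.algebraMap_def, Algebra.algebraMap_self, RingHom.id_apply] at this
  simpa [mulVec_diagonal, dotProduct, Finset.mul_sum, mul_left_comm] using this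

end Spectral

end Matrix

section SortedEigenvalues

variable {k : ℕ} {M : Matrix (Fin k) (Fin k) ℝ} (hM : M.IsHermitian)

lemma sortedEig_monotone : Monotone (sortedEig hM) := Tuple.monotone_sort _

lemma sum_sortedEig : ∑ j, sortedEig hM j = M.trace := by
  rw [hM.trace_eq_sum_eigenvalues]
  exact Equiv.sum_comp (Tuple.sort hM.eigenvalues) hM.eigenvalues

lemma card_sortedEig_ne_zero : Fintype.card {j // sortedEig hM j ≠ 0} = M.rank := by
  rw [hM.rank_eq_card_non_zero_eigs]
  exact Fintype.card_congr ((Tuple.sort hM.eigenvalues).subtypeEquiv fun _ => Iff.rfl)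

lemma sortedEig_zero_le (hk : 0 < k) (i : Fin k) : sortedEig hM ⟨0, hk⟩ ≤ hM.eigenvalues i := by
  obtain ⟨j, rfl⟩ := (Tuple.sort hM.eigenvalues).surjective i
  exact sortedEig_monotone hM (Fin.mk_le_mk.mpr (Nat.zero_le _))

end SortedEigenvalues

lemma Monotone.eq_zero_iff_lt_of_card {k d : ℕ} {f : Fin k → ℝ} (hf : Monotone f)
    (hf0 : ∀ j, 0 ≤ f j) (hcard : Fintype.card {j // f j ≠ 0} + d = k) (j : Fin k) :
    f j = 0 ↔ (j : ℕ) < d := by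
  have hzero : (Finset.univ.filter fun j => f j = 0).card = d := by
    have := Finset.card_filter_add_card_filter_not (s := Finset.univ) (p := fun j => f j = 0)
    rw [Fintype.card_subtype] at hcard
    simp only [ne_eq] at hcard
    simp only [Finset.card_univ, Fintype.card_fin] at this
    omega
  constructor
  · intro hj
    have hsub : Finset.Iic j ⊆ Finset.univ.filter fun j => f j = 0 := fun i hi => by
      simpa using le_antisymm (hj ▸ hf (Finset.mem_Iic.mp hi)) (hf0 i)
    simpa [hzero] using Finset.card_le_card hsub
  · intro hj
    by_contra hne
    have hsub : Finset.univ.filter (fun j => f j = 0) ⊆ Finset.Iio j := fun i hi => by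
      simp only [Finset.mem_filter, Finset.mem_univ, true_and] at hi
      exact Finset.mem_Iio.mpr (lt_of_not_ge fun hji => hne (le_antisymm (hi ▸ hf hji) (hf0 j)))
    have := Finset.card_le_card hsub
    simp [hzero] at this
    omega

lemma Matrix.PosSemidef.posDef_add_smul_one {ι : Type*} [DecidableEq ι] {M : Matrix ι ι ℝ}
    (hM : M.PosSemidef) {c : ℝ} (hc : 0 < c) : (M + c • 1).PosDef :=
  PosDef.posSemidef_add hM (PosDef.one.smul hc)

namespace Matrix

section NormalizedPencil

variable {ι : Type*} [Fintype ι] {M S : Matrix ι ι ℝ} {c μ : ℝ} {v w : ι → ℝ}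

lemma eq_zero_or_half_le_of_mulVec_eq_smul (hM : M.PosSemidef) (hc : 0 < c)
    (hgap : ∀ κ ≠ 0, M *ᵥ v = κ • v → c ≤ κ) (hv : v ≠ 0)
    (h : M *ᵥ v = μ • (M *ᵥ v + c • v)) : (μ = 0 ∨ 1 / 2 ≤ μ) ∧ μ ≤ 1 := by
  have ha : 0 ≤ v ⬝ᵥ (M *ᵥ v) := by simpa using hM.dotProduct_mulVec_nonneg v
  have hb : 0 < v ⬝ᵥ v := by simpa using dotProduct_star_self_pos_iff.mpr hv
  have key : v ⬝ᵥ (M *ᵥ v) = μ * (v ⬝ᵥ (M *ᵥ v) + c * (v ⬝ᵥ v)) := by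
    simpa [dotProduct_add, mul_add] using congrArg (v ⬝ᵥ ·) h
  have hμ1 : μ < 1 := by nlinarith [mul_pos hc hb]
  refine ⟨(eq_or_ne μ 0).imp_right fun hμ => ?_, hμ1.le⟩
  have hκ : M *ᵥ v = (μ * c / (1 - μ)) • v := by
    rw [div_eq_inv_mul, mul_smul, ← smul_smul, eq_inv_smul_iff₀ (sub_ne_zero.mpr hμ1.ne')]
    rw [sub_smul, one_smul, sub_eq_iff_eq_add]
    conv_lhs => rw [h]
    rw [smul_add, smul_smul, add_comm]
  have := hgap _ (div_ne_zero (mul_ne_zero hμ hc.ne') (sub_ne_zero.mpr hμ1.ne')) hκ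
  rw [le_div_iff₀ (sub_pos.mpr hμ1)] at this
  nlinarith

variable [DecidableEq ι]

lemma mulVec_inv_mulVec_eq_smul {N : Matrix ι ι ℝ} (hS : S * S = N)
    (hdet : IsUnit S.det) (hw : (S⁻¹ * M * S⁻¹) *ᵥ w = μ • w) :
    M *ᵥ (S⁻¹ *ᵥ w) = μ • (N *ᵥ (S⁻¹ *ᵥ w)) := by
  rw [← hS, ← mulVec_mulVec, mulVec_mulVec w S S⁻¹, mul_nonsing_inv _ hdet, one_mulVec]
  simpa only [mulVec_mulVec, mulVec_smul, ← Matrix.mul_assoc, mul_nonsing_inv _ hdet,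
    Matrix.one_mul] using congrArg (S *ᵥ ·) hw

lemma isUnit_det_of_mul_self_eq {N : Matrix ι ι ℝ} (hS : S * S = N) (hN : N.PosDef) :
    IsUnit S.det :=
  isUnit_of_mul_isUnit_left (by rw [← det_mul, hS]; exact (isUnit_iff_isUnit_det _).mp hN.isUnit)

lemma IsHermitian.inv_mul_mul_inv (hS : S.IsHermitian) (hM : M.IsHermitian) :
    (S⁻¹ * M * S⁻¹).IsHermitian := by
  have := isHermitian_mul_mul_conjTranspose S⁻¹ hM
  rwa [hS.inv.eq] at this

lemma trace_mul_inv_mul_conjTranspose {l : Type*} [Fintype l] {N : Matrix ι ι ℝ}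
    (hS : S * S = N) (C : Matrix l ι ℝ) :
    (C * N⁻¹ * Cᴴ).trace = (S⁻¹ * (Cᴴ * C) * S⁻¹).trace := by
  rw [← hS, Matrix.mul_inv_rev, trace_mul_cycle, ← Matrix.mul_assoc, trace_mul_comm,
    ← Matrix.mul_assoc, Matrix.mul_assoc]

lemma eigenvalues_inv_mul_mul_inv_mem (hM : M.PosSemidef) (hc : 0 < c)
    (hgap : ∀ v ≠ 0, ∀ κ ≠ 0, M *ᵥ v = κ • v → c ≤ κ) (hS : S * S = M + c • 1)
    (hK : (S⁻¹ * M * S⁻¹).IsHermitian) (i : ι) :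
    (hK.eigenvalues i = 0 ∨ 1 / 2 ≤ hK.eigenvalues i) ∧ hK.eigenvalues i ≤ 1 := by
  have hdet : IsUnit S.det := isUnit_det_of_mul_self_eq hS (hM.posDef_add_smul_one hc)
  set w : ι → ℝ := ⇑(hK.eigenvectorBasis i)
  have hw : w ≠ 0 := (WithLp.ofLp_eq_zero 2).ne.2 (hK.eigenvectorBasis.orthonormal.ne_zero i)
  have hv : S⁻¹ *ᵥ w ≠ 0 := fun h => hw (by
    rw [← one_mulVec w, ← mul_nonsing_inv _ hdet, ← mulVec_mulVec, h, mulVec_zero])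
  have h := mulVec_inv_mulVec_eq_smul hS hdet (hK.mulVec_eigenvectorBasis i)
  rw [add_mulVec, smul_mulVec, one_mulVec] at h
  exact eq_zero_or_half_le_of_mulVec_eq_smul hM hc (hgap _ hv) hv h

end NormalizedPencil

end Matrix

lemma sortedEig_inv_mul_mul_inv {k d : ℕ} {M S : Matrix (Fin k) (Fin k) ℝ} {c : ℝ}
    (hM : M.PosSemidef) (hc : 0 < c) (hgap : ∀ v ≠ 0, ∀ κ ≠ 0, M *ᵥ v = κ • v → c ≤ κ)
    (hrank : M.rank + d = k) (hS : S * S = M + c • 1) (hK : (S⁻¹ * M * S⁻¹).IsHermitian) :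
    (∀ j : Fin k, (j : ℕ) < d → sortedEig hK j = 0) ∧
      ∀ j : Fin k, d ≤ (j : ℕ) → 1 / 2 ≤ sortedEig hK j ∧ sortedEig hK j ≤ 1 := by
  have hmem : ∀ j, (sortedEig hK j = 0 ∨ 1 / 2 ≤ sortedEig hK j) ∧ sortedEig hK j ≤ 1 :=
    fun j => eigenvalues_inv_mul_mul_inv_mem hM hc hgap hS hK _
  have hdet : IsUnit S⁻¹.det :=
    isUnit_nonsing_inv_det _ (isUnit_det_of_mul_self_eq hS (hM.posDef_add_smul_one hc))
  have hrankK : (S⁻¹ * M * S⁻¹).rank = M.rank := by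
    rw [rank_mul_eq_left_of_isUnit_det _ _ hdet, rank_mul_eq_right_of_isUnit_det _ _ hdet]
  have hzero := (sortedEig_monotone hK).eq_zero_iff_lt_of_card
    (fun j => (hmem j).1.elim (·.ge) fun h => by linarith)
    (by rw [card_sortedEig_ne_zero, hrankK, hrank])
  exact ⟨fun j hj => (hzero j).mpr hj,
    fun j hj => ⟨(hmem j).1.resolve_left fun h => absurd ((hzero j).mp h) (not_lt.mpr hj),
      (hmem j).2⟩⟩

namespace Matrix

section AppendCols

variable {R : Type*} [CommRing R] {l m : Type*} {n d : ℕ}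

def appendCols (B : Matrix l (Fin n) R) (C : Matrix l (Fin d) R) : Matrix l (Fin (n + d)) R :=
  of fun i => Fin.append (B i) (C i)

lemma mul_appendCols [Fintype m] (A : Matrix l m R) (B : Matrix m (Fin n) R)
    (C : Matrix m (Fin d) R) :
    A * appendCols B C = appendCols (A * B) (A * C) := by
  ext i j
  refine Fin.addCases (fun r => ?_) (fun s => ?_) j <;> simp [appendCols, mul_apply]

lemma appendCols_mul_transpose_appendCols (B : Matrix l (Fin n) R) (C : Matrix l (Fin d) R)
    (D : Matrix m (Fin n) R) (E : Matrix m (Fin d) R) :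
    appendCols B C * (appendCols D E)ᵀ = B * Dᵀ + C * Eᵀ := by
  ext i j
  simp [appendCols, mul_apply, Fin.sum_univ_add]

lemma transpose_mulVec_dotProduct_self [Fintype l] [Fintype m] (B : Matrix m l R) (u : m → R) :
    (Bᵀ *ᵥ u) ⬝ᵥ (Bᵀ *ᵥ u) = u ⬝ᵥ ((B * Bᵀ) *ᵥ u) := by
  rw [← mulVec_mulVec, dotProduct_mulVec u B, mulVec_transpose]

end AppendCols

variable {m n d : ℕ}

lemma dotProduct_self_le_appendCols_one_mulVec (X : Matrix (Fin n) (Fin d) ℝ) {v : Fin (n + d) → ℝ}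
    {u : Fin n → ℝ} (hv : v = (appendCols (n := n) 1 X)ᵀ *ᵥ u) :
    v ⬝ᵥ v ≤ (appendCols (n := n) 1 X *ᵥ v) ⬝ᵥ (appendCols (n := n) 1 X *ᵥ v) := by
  have hP : appendCols (n := n) 1 X * (appendCols (n := n) 1 X)ᵀ = 1 + X * Xᵀ := by
    simp [appendCols_mul_transpose_appendCols]
  have hXw : u ⬝ᵥ (X *ᵥ (Xᵀ *ᵥ u)) = (Xᵀ *ᵥ u) ⬝ᵥ (Xᵀ *ᵥ u) := by
    rw [dotProduct_mulVec, ← mulVec_transpose]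
  have hv2 : v ⬝ᵥ v = u ⬝ᵥ u + (Xᵀ *ᵥ u) ⬝ᵥ (Xᵀ *ᵥ u) := by
    rw [hv, transpose_mulVec_dotProduct_self, hP, add_mulVec, one_mulVec, dotProduct_add,
      ← mulVec_mulVec, hXw]
  have hPv : appendCols (n := n) 1 X *ᵥ v = u + X *ᵥ (Xᵀ *ᵥ u) := by
    rw [hv, mulVec_mulVec, hP, add_mulVec, one_mulVec, mulVec_mulVec]
  have hw := dotProduct_star_self_nonneg (Xᵀ *ᵥ u)
  have hXw' := dotProduct_star_self_nonneg (X *ᵥ (Xᵀ *ᵥ u))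
  rw [star_trivial] at hw hXw'
  rw [hv2, hPv, add_dotProduct, dotProduct_add, dotProduct_add,
    dotProduct_comm (X *ᵥ (Xᵀ *ᵥ u)) u, hXw]
  linarith

lemma le_of_conjTranspose_mul_self_mulVec_eq_smul {A : Matrix (Fin m) (Fin n) ℝ}
    (X : Matrix (Fin n) (Fin d) ℝ) {c : ℝ} (hc : 0 ≤ c)
    (hA : ∀ u, c * (u ⬝ᵥ u) ≤ (A *ᵥ u) ⬝ᵥ (A *ᵥ u)) {v : Fin (n + d) → ℝ} (hv : v ≠ 0)
    {κ : ℝ} (hκ : κ ≠ 0)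
    (h : ((A * appendCols (n := n) 1 X)ᴴ * (A * appendCols (n := n) 1 X)) *ᵥ v = κ • v) :
    c ≤ κ := by
  set P := appendCols (n := n) 1 X
  have hrange : v = Pᵀ *ᵥ (κ⁻¹ • ((Aᵀ * A * P) *ᵥ v)) := by
    rw [mulVec_smul, mulVec_mulVec, ← Matrix.mul_assoc, ← Matrix.mul_assoc, ← transpose_mul,
      ← conjTranspose_eq_transpose_of_trivial, Matrix.mul_assoc, h, inv_smul_smul₀ hκ]
  have hquad : κ * (v ⬝ᵥ v) = (A *ᵥ (P *ᵥ v)) ⬝ᵥ (A *ᵥ (P *ᵥ v)) := by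
    rw [mulVec_mulVec, ← transpose_transpose (A * P), transpose_mulVec_dotProduct_self,
      transpose_transpose, ← conjTranspose_eq_transpose_of_trivial, h, dotProduct_smul,
      smul_eq_mul]
  have hb : 0 < v ⬝ᵥ v := by simpa using dotProduct_star_self_pos_iff.mpr hv
  have := dotProduct_self_le_appendCols_one_mulVec X hrange
  nlinarith [hA (P *ᵥ v)]

lemma rank_mul_appendCols_one {A : Matrix (Fin m) (Fin n) ℝ} (X : Matrix (Fin n) (Fin d) ℝ)
    (hA : IsUnit (Aᵀ * A).det) : (A * appendCols (n := n) 1 X).rank = n := by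
  set P := appendCols (n := n) 1 X
  set Q := (appendCols (n := n) 1 (0 : Matrix (Fin n) (Fin d) ℝ))ᵀ
  have hPQ : P * Q = 1 := by simp [P, Q, appendCols_mul_transpose_appendCols]
  refine le_antisymm ((rank_mul_le_left _ _).trans (rank_le_width A)) ?_
  calc n = (Aᵀ * (A * P) * Q).rank := by
        rw [Matrix.mul_assoc, Matrix.mul_assoc, hPQ, Matrix.mul_one,
          rank_of_isUnit _ ((isUnit_iff_isUnit_det _).mpr hA), Fintype.card_fin]
    _ ≤ (A * P).rank := (rank_mul_le_left _ _).trans (rank_mul_le_right _ _)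

lemma appendCols_one_mul_eq_zero (X : Matrix (Fin n) (Fin d) ℝ) :
    appendCols (n := n) 1 X * of (fun i j =>
      Fin.append (fun r => X r j) (fun r => if r = j then (-1 : ℝ) else 0) i) = 0 := by
  ext i j
  simp [appendCols, mul_apply, Fin.sum_univ_add, one_apply]

end Matrix

lemma mul_le_sum_and_sum_le_mul {n d : ℕ} {f : Fin (n + d) → ℝ} {a b : ℝ}
    (hzero : ∀ j : Fin (n + d), (j : ℕ) < d → f j = 0)
    (hbound : ∀ j : Fin (n + d), d ≤ (j : ℕ) → a ≤ f j ∧ f j ≤ b) :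
    n * a ≤ ∑ j, f j ∧ ∑ j, f j ≤ n * b := by
  rw [← Fin.sum_congr' f (add_comm d n), Fin.sum_univ_add,
    Finset.sum_eq_zero fun i _ => hzero _ (by simp), zero_add]
  have hb i := hbound (Fin.cast (add_comm d n) (Fin.natAdd d i)) (by simp)
  constructor
  · simpa using Finset.sum_le_sum fun i (_ : i ∈ Finset.univ) => (hb i).1
  · simpa using Finset.sum_le_sum fun i (_ : i ∈ Finset.univ) => (hb i).2

/-- Properties of the normalizing matrix N = C₀ᵀC₀ + λ_min(A₀ᵀA₀)·I, where
C₀ = [A₀, A₀X₀] and A₀ᵀA₀ is nonsingular: N is positive definite,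
N(X₀;−I) = λ_min(A₀ᵀA₀)(X₀;−I), the eigenvalues of N^{-1/2}C₀ᵀC₀N^{-1/2} are 0 for
the d smallest and lie in [1/2,1] for the rest, and n/2 ≤ trace(C₀N⁻¹C₀ᵀ) ≤ n. -/
theorem normalizer_properties {m n d : ℕ} (hn : 0 < n)
    (A₀ : Matrix (Fin m) (Fin n) ℝ) (X₀ : Matrix (Fin n) (Fin d) ℝ)
    (hA : IsUnit (A₀ᵀ * A₀).det) :
    let C₀ : Matrix (Fin m) (Fin (n + d)) ℝ :=
      Matrix.of fun i => Fin.append (A₀ i) ((A₀ * X₀) i)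
    let lmin : ℝ := sortedEig (by simpa using Matrix.isHermitian_conjTranspose_mul_self A₀ : (A₀ᵀ * A₀).IsHermitian) ⟨0, hn⟩
    let N : Matrix (Fin (n + d)) (Fin (n + d)) ℝ := C₀ᴴ * C₀ + lmin • 1
    let Xe : Matrix (Fin (n + d)) (Fin d) ℝ :=
      Matrix.of fun i j =>
        Fin.append (fun r : Fin n => X₀ r j) (fun r : Fin d => if r = j then (-1 : ℝ) else 0) i
    N.PosDef ∧
    N * Xe = lmin • Xe ∧
    (∀ (hN : N.PosSemidef)
        (hK : ((hN.sqrt)⁻¹ * (C₀ᴴ * C₀) * (hN.sqrt)⁻¹).IsHermitian),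
      (∀ j : Fin (n + d), (j : ℕ) < d → sortedEig hK j = 0) ∧
      (∀ j : Fin (n + d), d ≤ (j : ℕ) →
        1 / 2 ≤ sortedEig hK j ∧ sortedEig hK j ≤ 1)) ∧
    (n : ℝ) / 2 ≤ Matrix.trace (C₀ * N⁻¹ * C₀ᴴ) ∧
    Matrix.trace (C₀ * N⁻¹ * C₀ᴴ) ≤ (n : ℝ) := by
  intro C₀ lmin N Xe
  have hC : C₀ = A₀ * appendCols 1 X₀ := by rw [mul_appendCols, Matrix.mul_one]; rfl
  have hAA : (A₀ᵀ * A₀).PosDef := by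
    simpa using (posSemidef_conjTranspose_mul_self A₀).posDef_iff_isUnit.mpr
      ((isUnit_iff_isUnit_det _).mpr hA)
  have hlmin : 0 < lmin := hAA.eigenvalues_pos _
  have hA₀ (u : Fin n → ℝ) : lmin * (u ⬝ᵥ u) ≤ (A₀ *ᵥ u) ⬝ᵥ (A₀ *ᵥ u) := by
    refine (hAA.1.mul_dotProduct_self_le (sortedEig_zero_le _ hn) u).trans_eq ?_
    simpa using (transpose_mulVec_dotProduct_self A₀ᵀ u).symm
  have hM : (C₀ᴴ * C₀).PosSemidef := posSemidef_conjTranspose_mul_self C₀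
  have hgap : ∀ v ≠ 0, ∀ κ ≠ 0, (C₀ᴴ * C₀) *ᵥ v = κ • v → lmin ≤ κ := by
    rw [hC]
    exact fun v hv κ hκ => le_of_conjTranspose_mul_self_mulVec_eq_smul X₀ hlmin.le hA₀ hv hκ
  have hrank : (C₀ᴴ * C₀).rank + d = n + d := by
    rw [rank_conjTranspose_mul_self, hC, rank_mul_appendCols_one X₀ hA]
  have hspec (hN : N.PosSemidef) := sortedEig_inv_mul_mul_inv hM hlmin hgap hrank hN.sqrt_mul_self
  have hNpd : N.PosDef := hM.posDef_add_smul_one hlmin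
  have hCXe : C₀ * Xe = 0 := by
    rw [hC, Matrix.mul_assoc, appendCols_one_mul_eq_zero, Matrix.mul_zero]
  refine ⟨hNpd, ?_, hspec, ?_⟩
  · change (C₀ᴴ * C₀ + lmin • 1) * Xe = _
    rw [Matrix.add_mul, Matrix.mul_assoc, hCXe, Matrix.mul_zero, zero_add, smul_mul, Matrix.one_mul]
  · have hN := hNpd.posSemidef
    have hK := hN.isHermitian_sqrt.inv_mul_mul_inv hM.1
    obtain ⟨hzero, hbound⟩ := hspec hN hK
    rw [trace_mul_inv_mul_conjTranspose hN.sqrt_mul_self, ← sum_sortedEig hK]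
    have := mul_le_sum_and_sum_le_mul hzero hbound
    constructor <;> linarith [this.1, this.2]
end
end
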